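/- arXiv:2507.04063 — 9 statements merged into one kernel-verified Lean document; each statement's English description precedes it below -/
import Mathlib

section
/- Let g be a nilpotent Lie algebra with bracket μ, let h be a Lie subalgebra of g of codimension 2, and let a_1, a_2 ∈ g be linearly independent elements with g = span{a_1, a_2} ⊕ h. Let y be an element of the centralizer of h in g. Define the alternating bilinear map σ by σ(a_1, a_2) = y, σ(a_1, h) = σ(a_2, h) = 0 for all h ∈ h, and σ(h, h') = 0 for all h, h' ∈ h. Then for every scalar t, the bilinear map μ_t = μ + t·σ satisfies the Jacobi identity, i.e., μ_t is a Lie bracket. -/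
/-!
The hypotheses force `σ x x' = (φ₁ ∧ φ₂)(x, x') • y`, where `φ₁, φ₂` are the coordinates of
`L ⧸ H` in the basis `[a₁], [a₂]`. The Jacobi identity for `μ + t σ` splits by powers of `t` into
the Jacobi identity for `μ`, the cocycle condition `d σ = 0`, and `∑_cyc σ x (σ y z) = 0`.
Every cyclic sum `(φ₁ ∧ φ₂)(y, z) ψ(x)` with `ψ ∈ span {φ₁, φ₂}` vanishes (three vectors in a
plane); this kills the `t²` term and, since `y` centralises `H` so that `⁅x, y⁆` only depends on
`φ₁ x, φ₂ x`, the `⁅x, σ y z⁆` part of `d σ`. What remains is that `φ₁ ∧ φ₂` is a scalar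
2-cocycle, which comes down to `φ₁ ⁅h, a₁⁆ + φ₂ ⁅h, a₂⁆ = 0` for `h ∈ H`: this is the trace of the
map induced by `ad h` on `L ⧸ H`, which is nilpotent because `L` is.
-/

/-- The deformed bracket `μ_t(x,y) = ⁅x,y⁆ + t • σ x y`. -/
def deformedBracket {K L : Type*} [Field K] [LieRing L] [LieAlgebra K L]
    (σ : L →ₗ[K] L →ₗ[K] L) (t : K) (x y : L) : L :=
  ⁅x, y⁆ + t • σ x y

open LieModule.Cohomology Submodule

def wedgeForm {K M : Type*} [CommRing K] [AddCommGroup M] [Module K M] (φ₁ φ₂ : M →ₗ[K] K)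
    (x x' : M) : K :=
  φ₁ x * φ₂ x' - φ₂ x * φ₁ x'

section

variable {K L ι : Type*} [Field K] [LieRing L] [LieAlgebra K L]
  {φ₁ φ₂ : L →ₗ[K] K} {σ : twoCochain K L L} {y₀ a₁ a₂ : L}

theorem deformedBracket_jacobi (hσ : σ ∈ twoCocycle K L L)
    (hsq : ∀ x y z, σ x (σ y z) + σ y (σ z x) + σ z (σ x y) = 0) (t : K) (x y z : L) :
    deformedBracket σ.1 t x (deformedBracket σ.1 t y z) +
      deformedBracket σ.1 t y (deformedBracket σ.1 t z x) +
      deformedBracket σ.1 t z (deformedBracket σ.1 t x y) = 0 := by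
  have hd : d₂₃ K L L σ x y z = 0 := by rw [(mem_twoCocycle_iff K L L σ).1 hσ]; rfl
  rw [d₂₃_apply, ← twoCochain_skew σ z x, ← twoCochain_skew σ z ⁅x, y⁆,
    ← twoCochain_skew σ y ⁅x, z⁆, ← twoCochain_skew σ x ⁅y, z⁆, ← lie_skew x z, map_neg,
    lie_neg] at hd
  simp only [deformedBracket, twoCochain_val_apply, lie_add, lie_smul, map_add, map_smul]
  linear_combination (norm := module) lie_jacobi x y z + t • hd + (t * t) • hsq x y z

theorem cyclic_apply_apply_eq_zero_of_eq_wedgeForm_smul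
    (hσ : ∀ x x', σ x x' = wedgeForm φ₁ φ₂ x x' • y₀) (x y z : L) :
    σ x (σ y z) + σ y (σ z x) + σ z (σ x y) = 0 := by
  simp only [hσ, map_smul, wedgeForm, smul_eq_mul]
  module

theorem mem_twoCocycle_of_eq_wedgeForm_smul
    (hσ : ∀ x x', σ x x' = wedgeForm φ₁ φ₂ x x' • y₀)
    (hω : ∀ x y z,
      wedgeForm φ₁ φ₂ x ⁅y, z⁆ + wedgeForm φ₁ φ₂ y ⁅z, x⁆ + wedgeForm φ₁ φ₂ z ⁅x, y⁆ = 0)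
    {u₁ u₂ : L} (had : ∀ x, ⁅x, y₀⁆ = φ₁ x • u₁ + φ₂ x • u₂) :
    σ ∈ twoCocycle K L L := by
  rw [mem_twoCocycle_iff]
  ext x y z
  have hxyz := hω x y z
  rw [← lie_skew z x] at hxyz
  simp only [d₂₃_apply, hσ, lie_smul, had, LinearMap.zero_apply]
  simp only [wedgeForm, map_neg] at hxyz ⊢
  linear_combination (norm := module) hxyz • y₀

theorem eq_wedgeForm_smul_of_apply_mem_eq_zero {H : Submodule K L}
    (hdecomp : ∀ x, ∃ h ∈ H, x = φ₁ x • a₁ + φ₂ x • a₂ + h)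
    (hσ₁ : ∀ h ∈ H, σ a₁ h = 0) (hσ₂ : ∀ h ∈ H, σ a₂ h = 0)
    (hσH : ∀ h ∈ H, ∀ h' ∈ H, σ h h' = 0) (x x' : L) :
    σ x x' = wedgeForm φ₁ φ₂ x x' • σ a₁ a₂ := by
  obtain ⟨h, hh, hx⟩ := hdecomp x
  obtain ⟨h', hh', hx'⟩ := hdecomp x'
  have hσh (i : L) (hi : σ i h = 0) : σ h i = 0 := by rw [← twoCochain_skew, hi, neg_zero]
  conv_lhs => rw [hx, hx']
  simp only [map_add, map_smul, LinearMap.add_apply, LinearMap.smul_apply, twoCochain_alt,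
    hσ₁ h' hh', hσ₂ h' hh', hσH h hh h' hh', hσh a₁ (hσ₁ h hh), hσh a₂ (hσ₂ h hh),
    ← twoCochain_skew σ a₁ a₂, wedgeForm]
  module

theorem lie_eq_smul_add_smul_of_forall_lie_mem_eq_zero {H : Submodule K L}
    (hdecomp : ∀ x, ∃ h ∈ H, x = φ₁ x • a₁ + φ₂ x • a₂ + h) (hy : ∀ h ∈ H, ⁅y₀, h⁆ = 0)
    (x : L) :
    ⁅x, y₀⁆ = φ₁ x • ⁅a₁, y₀⁆ + φ₂ x • ⁅a₂, y₀⁆ := by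
  obtain ⟨h, hh, hx⟩ := hdecomp x
  conv_lhs => rw [hx]
  rw [add_lie, add_lie, smul_lie, smul_lie, ← lie_skew h y₀, hy h hh, neg_zero, add_zero]

theorem apply_lie_eq_of_eq_add {H : LieSubalgebra K L} {φ : L →ₗ[K] K} (hφ : ∀ h ∈ H, φ h = 0)
    {u v h h' : L} {c₁ c₂ d₁ d₂ : K} (hh : h ∈ H) (hh' : h' ∈ H)
    (hu : u = c₁ • a₁ + c₂ • a₂ + h) (hv : v = d₁ • a₁ + d₂ • a₂ + h') :
    φ ⁅u, v⁆ = (c₁ * d₂ - c₂ * d₁) * φ ⁅a₁, a₂⁆ - c₁ * φ ⁅h', a₁⁆ - c₂ * φ ⁅h', a₂⁆ +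
      d₁ * φ ⁅h, a₁⁆ + d₂ * φ ⁅h, a₂⁆ := by
  subst hu hv
  simp only [lie_add, add_lie, lie_smul, smul_lie, lie_self, map_add, map_smul, map_neg,
    map_zero, smul_eq_mul, hφ _ (H.lie_mem hh hh'), ← lie_skew a₂ a₁, ← lie_skew a₁ h',
    ← lie_skew a₂ h']
  ring

theorem wedgeForm_cyclic_lie_eq_zero {H : LieSubalgebra K L}
    (hdecomp : ∀ x, ∃ h ∈ H, x = φ₁ x • a₁ + φ₂ x • a₂ + h)
    (hφ₁ : ∀ h ∈ H, φ₁ h = 0) (hφ₂ : ∀ h ∈ H, φ₂ h = 0)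
    (htr : ∀ h ∈ H, φ₁ ⁅h, a₁⁆ + φ₂ ⁅h, a₂⁆ = 0) (x y z : L) :
    wedgeForm φ₁ φ₂ x ⁅y, z⁆ + wedgeForm φ₁ φ₂ y ⁅z, x⁆ + wedgeForm φ₁ φ₂ z ⁅x, y⁆ = 0 := by
  obtain ⟨hx, hhx, ex⟩ := hdecomp x
  obtain ⟨hy, hhy, ey⟩ := hdecomp y
  obtain ⟨hz, hhz, ez⟩ := hdecomp z
  simp only [wedgeForm, apply_lie_eq_of_eq_add hφ₁ hhy hhz ey ez,
    apply_lie_eq_of_eq_add hφ₂ hhy hhz ey ez, apply_lie_eq_of_eq_add hφ₁ hhz hhx ez ex,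
    apply_lie_eq_of_eq_add hφ₂ hhz hhx ez ex, apply_lie_eq_of_eq_add hφ₁ hhx hhy ex ey,
    apply_lie_eq_of_eq_add hφ₂ hhx hhy ex ey]
  linear_combination (norm := (simp only [wedgeForm]; ring))
    -(wedgeForm φ₁ φ₂ x y * htr hz hhz + wedgeForm φ₁ φ₂ y z * htr hx hhx +
      wedgeForm φ₁ φ₂ z x * htr hy hhy)

theorem LinearIndependent.exists_basis_quotient_of_isCompl {v : ι → L}
    (hv : LinearIndependent K v) {H : Submodule K L} (hc : IsCompl (span K (Set.range v)) H) :
    ∃ b : Module.Basis ι K (L ⧸ H), ∀ i, b i = Submodule.Quotient.mk (v i) :=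
  ⟨(Module.Basis.span hv).map (quotientEquivOfIsCompl H _ hc.symm).symm,
    fun i => by simp [Module.Basis.span_apply]⟩

theorem Module.Basis.exists_mem_eq_sum_repr_mk_smul_add [Fintype ι] {H : Submodule K L}
    (b : Module.Basis ι K (L ⧸ H)) {a : ι → L} (hb : ∀ i, b i = Submodule.Quotient.mk (a i))
    (x : L) : ∃ h ∈ H, x = ∑ i, b.repr (Submodule.Quotient.mk x) i • a i + h := by
  refine ⟨x - ∑ i, b.repr (Submodule.Quotient.mk x) i • a i, ?_, by abel⟩
  rw [← Submodule.Quotient.eq, ← Submodule.mkQ_apply H (∑ i, _), map_sum]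
  simp only [map_smul, Submodule.mkQ_apply, ← hb, b.sum_repr]

theorem LieSubalgebra.sum_repr_mk_lie_eq_zero [LieRing.IsNilpotent L] [Fintype ι]
    [DecidableEq ι] {H : LieSubalgebra K L} (b : Module.Basis ι K (L ⧸ H.toSubmodule)) {a : ι → L}
    (hb : ∀ i, b i = Submodule.Quotient.mk (a i)) {h : L} (hh : h ∈ H) :
    ∑ i, b.repr (Submodule.Quotient.mk ⁅h, a i⁆) i = 0 := by
  have : Module.Finite K (L ⧸ H.toSubmodule) := .of_basis b
  set f := H.toSubmodule.mapQ H.toSubmodule (LieModule.toEnd K L L h)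
    fun _ hx => H.lie_mem hh hx
  have hf (i : ι) : f (b i) = Submodule.Quotient.mk ⁅h, a i⁆ := by rw [hb]; rfl
  have hnil : IsNilpotent f :=
    Module.End.IsNilpotent.mapQ _ (LieModule.isNilpotent_toEnd_of_isNilpotent K L L h)
  have htr := (LinearMap.isNilpotent_trace_of_isNilpotent hnil).eq_zero
  rw [LinearMap.trace_eq_matrix_trace K b, Matrix.trace] at htr
  simpa only [Matrix.diag_apply, LinearMap.toMatrix_apply, hf] using htr

end

theorem linear_deformation_is_lie_bracket_general
    {K L : Type*} [Field K] [LieRing L] [LieAlgebra K L]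
    (hnilp : LieRing.IsNilpotent L)
    (H : LieSubalgebra K L) (a₁ a₂ : L)
    (hind : LinearIndependent K ![a₁, a₂])
    (hcompl : IsCompl (Submodule.span K {a₁, a₂}) H.toSubmodule)
    (y : L) (hy : ∀ x ∈ H, ⁅y, x⁆ = 0)
    (σ : L →ₗ[K] L →ₗ[K] L) (halt : ∀ x, σ x x = 0)
    (hσa : σ a₁ a₂ = y)
    (hσ1h : ∀ x ∈ H, σ a₁ x = 0) (hσ2h : ∀ x ∈ H, σ a₂ x = 0)
    (hσhh : ∀ x ∈ H, ∀ x' ∈ H, σ x x' = 0) :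
    ∀ t : K, ∀ x y' z : L,
      deformedBracket σ t x (deformedBracket σ t y' z) +
      deformedBracket σ t y' (deformedBracket σ t z x) +
      deformedBracket σ t z (deformedBracket σ t x y') = 0 := by
  rw [← Matrix.range_cons_cons_empty] at hcompl
  obtain ⟨b, hb⟩ := hind.exists_basis_quotient_of_isCompl hcompl
  set φ₁ := b.coord 0 ∘ₗ H.toSubmodule.mkQ
  set φ₂ := b.coord 1 ∘ₗ H.toSubmodule.mkQ
  have hdecomp (x : L) : ∃ h ∈ H, x = φ₁ x • a₁ + φ₂ x • a₂ + h := by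
    simpa [Fin.sum_univ_two, φ₁, φ₂] using b.exists_mem_eq_sum_repr_mk_smul_add hb x
  have hφ (i : Fin 2) (h : L) (hh : h ∈ H) : (b.coord i ∘ₗ H.toSubmodule.mkQ) h = 0 := by
    simp [(Submodule.Quotient.mk_eq_zero _).2 hh]
  have htr (h : L) (hh : h ∈ H) : φ₁ ⁅h, a₁⁆ + φ₂ ⁅h, a₂⁆ = 0 := by
    simpa [Fin.sum_univ_two, φ₁, φ₂] using LieSubalgebra.sum_repr_mk_lie_eq_zero b hb hh
  let σ' : twoCochain K L L := ⟨σ, halt⟩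
  have hσ (x x' : L) : σ' x x' = wedgeForm φ₁ φ₂ x x' • y := by
    rw [eq_wedgeForm_smul_of_apply_mem_eq_zero hdecomp hσ1h hσ2h hσhh]
    exact congrArg _ hσa
  refine deformedBracket_jacobi ?_ (cyclic_apply_apply_eq_zero_of_eq_wedgeForm_smul hσ)
  exact mem_twoCocycle_of_eq_wedgeForm_smul hσ
    (wedgeForm_cyclic_lie_eq_zero hdecomp (hφ 0) (hφ 1) htr)
    (lie_eq_smul_add_smul_of_forall_lie_mem_eq_zero hdecomp hy)

/-- Linear deformation theorem: for `g` nilpotent, `h` a codimension-2 subalgebra,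
`g = span{a₁,a₂} ⊕ h`, and `y` centralizing `h`, the bracket `μ_t = μ + t σ` (where
`σ(a₁,a₂) = y`, `σ(a_i,h) = 0`, `σ(h,h') = 0`) satisfies the Jacobi identity for all `t`. -/
theorem linear_deformation_is_lie_bracket
    {K L : Type*} [Field K] [CharZero K] [LieRing L] [LieAlgebra K L]
    [FiniteDimensional K L] (hnilp : LieRing.IsNilpotent L)
    (H : LieSubalgebra K L) (a₁ a₂ : L)
    (hind : LinearIndependent K ![a₁, a₂])
    (hcompl : IsCompl (Submodule.span K {a₁, a₂}) H.toSubmodule)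
    (y : L) (hy : ∀ x ∈ H, ⁅y, x⁆ = 0)
    (σ : L →ₗ[K] L →ₗ[K] L) (halt : ∀ x, σ x x = 0)
    (hσa : σ a₁ a₂ = y)
    (hσ1h : ∀ x ∈ H, σ a₁ x = 0) (hσ2h : ∀ x ∈ H, σ a₂ x = 0)
    (hσhh : ∀ x ∈ H, ∀ x' ∈ H, σ x x' = 0) :
    ∀ t : K, ∀ x y' z : L,
      deformedBracket σ t x (deformedBracket σ t y' z) +
      deformedBracket σ t y' (deformedBracket σ t z x) +
      deformedBracket σ t z (deformedBracket σ t x y') = 0 :=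
  linear_deformation_is_lie_bracket_general hnilp H a₁ a₂ hind hcompl y hy σ halt hσa hσ1h hσ2h hσhh
end

section
/- Let g = V_1 ⊕ ... ⊕ V_k be a Lie algebra with Carnot grading (so [V_i,V_j] ⊆ V_{i+j} and g^i = V_{i+1} ⊕ ... ⊕ V_k), let a_1, a_2 ∈ V_1 be linearly independent with [a_1, a_2] = 0, and let y ∈ V_k. Let h = V_1' ⊕ V_2 ⊕ ... ⊕ V_k where V_1' is a complement of span{a_1, a_2} in V_1, and define σ by σ(a_1,a_2) = y and σ vanishing when either argument lies in h. Then the deformed bracket μ_t = μ + t·σ is at most k-step nilpotent for every scalar t, i.e., (μ_t)^k = 0 for the lower central series of μ_t. -/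
/-- Lower central series of an arbitrary bilinear bracket `B`. -/
def lcsOf (K : Type*) {L : Type*} [Field K] [AddCommGroup L] [Module K L]
    (B : L → L → L) : ℕ → Submodule K L
  | 0 => ⊤
  | n + 1 => Submodule.span K {z | ∃ x, ∃ y ∈ lcsOf K B n, z = B x y}

/-!
Write `g^n = ⨆_{j > n} V j`, so that the grading gives `⁅g, g^n⁆ ≤ g^(n+1)`. The cochain `σ` is
alternating and kills `h`, and `span {a₁, a₂} ⊔ h = g`; hence `σ` takes values in `K ∙ y`, which
lies in `V k ≤ g^1`, and `σ` vanishes on `g × g^n` for `n ≥ 1` because `g^n ≤ h`. So `μ_t` maps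
`g × g^n` into `g^(n+1)`, its lower central series is dominated by `g^n`, and `g^k = 0`.
-/

section LowerCentralSeries

variable {K L : Type*} [Field K] [AddCommGroup L] [Module K L]

theorem lcsOf_le_of_forall_mem_succ {B : L → L → L} {F : ℕ → Submodule K L} (hF0 : F 0 = ⊤)
    (hB : ∀ n x, ∀ z ∈ F n, B x z ∈ F (n + 1)) (n : ℕ) : lcsOf K B n ≤ F n := by
  induction n with
  | zero => simp [lcsOf, hF0]
  | succ n ih =>
    rw [lcsOf, Submodule.span_le]
    rintro _ ⟨x, z, hz, rfl⟩
    exact hB n x z (ih hz)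

end LowerCentralSeries

section Bilinear

variable {K M N : Type*} [Field K] [AddCommGroup M] [Module K M] [AddCommGroup N] [Module K N]

theorem LinearMap.IsAlt.apply_mem_span_singleton {σ : M →ₗ[K] M →ₗ[K] N} (hσ : σ.IsAlt)
    {a b u v : M} (hu : u ∈ Submodule.span K {a, b}) (hv : v ∈ Submodule.span K {a, b}) :
    σ u v ∈ K ∙ σ a b := by
  obtain ⟨α, β, rfl⟩ := Submodule.mem_span_pair.mp hu
  obtain ⟨γ, δ, rfl⟩ := Submodule.mem_span_pair.mp hv
  have hba : σ b a = -σ a b := (hσ.neg a b).symm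
  have hexpand : σ (α • a + β • b) (γ • a + δ • b) = (α * δ - β * γ) • σ a b := by
    simp only [map_add, map_smul, LinearMap.add_apply, LinearMap.smul_apply, hσ.self_eq_zero,
      hba]
    module
  rw [hexpand]
  exact Submodule.smul_mem _ _ (Submodule.mem_span_singleton_self _)

theorem LinearMap.apply_mem_of_sup_eq_top {σ : M →ₗ[K] M →ₗ[K] N} {P H : Submodule K M}
    (hPH : P ⊔ H = ⊤) (hH : ∀ x z, x ∈ H ∨ z ∈ H → σ x z = 0) {S : Submodule K N}
    (hP : ∀ u ∈ P, ∀ v ∈ P, σ u v ∈ S) (x z : M) : σ x z ∈ S := by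
  obtain ⟨u, hu, h, hh, rfl⟩ := Submodule.mem_sup.mp (hPH ▸ Submodule.mem_top : x ∈ P ⊔ H)
  obtain ⟨v, hv, h', hh', rfl⟩ := Submodule.mem_sup.mp (hPH ▸ Submodule.mem_top : z ∈ P ⊔ H)
  simp only [map_add, LinearMap.add_apply, hH u h' (.inr hh'), hH h v (.inl hh),
    hH h h' (.inl hh), add_zero]
  exact hP u hu v hv

end Bilinear

section Graded

variable {K L : Type*} [Field K] [LieRing L] [LieAlgebra K L] {V : ℕ → Submodule K L}

def degreeAbove (V : ℕ → Submodule K L) (n : ℕ) : Submodule K L :=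
  ⨆ j, ⨆ _ : n < j, V j

theorem le_degreeAbove {n j : ℕ} (h : n < j) : V j ≤ degreeAbove V n :=
  le_iSup₂_of_le j h le_rfl

theorem degreeAbove_antitone : Antitone (degreeAbove V) :=
  fun _ _ hmn => iSup₂_le fun _ hj => le_degreeAbove (hmn.trans_lt hj)

theorem degreeAbove_eq_sup_succ (n : ℕ) :
    degreeAbove V n = V (n + 1) ⊔ degreeAbove V (n + 1) := by
  refine le_antisymm (iSup₂_le fun j hj => ?_)
    (sup_le (le_degreeAbove n.lt_succ_self) (degreeAbove_antitone n.le_succ))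
  rcases (Nat.succ_le_of_lt hj).eq_or_lt with rfl | hj'
  · exact le_sup_left
  · exact le_sup_of_le_right (le_degreeAbove hj')

theorem degreeAbove_zero (hV0 : V 0 = ⊥) (htop : ⨆ i, V i = ⊤) : degreeAbove V 0 = ⊤ := by
  rw [eq_top_iff, ← htop, iSup_le_iff]
  rintro (_ | i)
  · simp [hV0]
  · exact le_degreeAbove i.succ_pos

theorem degreeAbove_eq_bot {k : ℕ} (hVk : ∀ l, k < l → V l = ⊥) : degreeAbove V k = ⊥ :=
  le_bot_iff.mp <| iSup₂_le fun l hl => (hVk l hl).le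

theorem lie_mem_degreeAbove_succ (hV0 : V 0 = ⊥) (htop : ⨆ i, V i = ⊤)
    (hbr : ∀ i j : ℕ, ∀ x ∈ V i, ∀ y ∈ V j, ⁅x, y⁆ ∈ V (i + j)) {n : ℕ} (x : L) {z : L}
    (hz : z ∈ degreeAbove V n) : ⁅x, z⁆ ∈ degreeAbove V (n + 1) := by
  rw [degreeAbove] at hz
  induction hz using Submodule.iSup_induction' with
  | mem j z hz =>
    by_cases hj : n < j
    · rw [iSup_pos hj] at hz
      have hx : x ∈ ⨆ i, V i := htop ▸ Submodule.mem_top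
      induction hx using Submodule.iSup_induction' with
      | mem i x hx =>
        rcases i with _ | i
        · simp [(Submodule.mem_bot K).mp (hV0 ▸ hx)]
        · exact le_degreeAbove (by omega) (hbr _ j x hx z hz)
      | zero => simp
      | add x x' _ _ hx hx' => simpa only [add_lie] using add_mem hx hx'
    · rw [iSup_neg hj, Submodule.mem_bot] at hz
      simp [hz]
  | zero => simp
  | add z z' _ _ hz hz' => simpa only [lie_add] using add_mem hz hz'

end Graded

theorem deformed_bracket_at_most_k_step_general
    {K L : Type*} [Field K] [LieRing L] [LieAlgebra K L]
    (k : ℕ) (hk : 2 ≤ k) (V : ℕ → Submodule K L)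
    (hV0 : V 0 = ⊥) (hVk : ∀ l, k < l → V l = ⊥)
    (hdirect : DirectSum.IsInternal V)
    (hbr : ∀ i j : ℕ, ∀ x ∈ V i, ∀ y ∈ V j, ⁅x, y⁆ ∈ V (i + j))
    (a₁ a₂ : L)
    (y : L) (hy : y ∈ V k)
    (V₁' : Submodule K L)
    (hV₁'sup : V₁' ⊔ Submodule.span K {a₁, a₂} = V 1)
    (σ : L →ₗ[K] L →ₗ[K] L) (halt : ∀ x, σ x x = 0)
    (hσa : σ a₁ a₂ = y)
    (hσh : ∀ x y' : L, x ∈ V₁' ⊔ (⨆ j, ⨆ _ : 2 ≤ j, V j) ∨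
        y' ∈ V₁' ⊔ (⨆ j, ⨆ _ : 2 ≤ j, V j) → σ x y' = 0) :
    ∀ t : K, lcsOf K (deformedBracket σ t) k = ⊥ := by
  intro t
  have htop : ⨆ i, V i = ⊤ := hdirect.submodule_iSup_eq_top
  -- `degreeAbove V 1` is `⨆ j, ⨆ _ : 2 ≤ j, V j` by definition (`1 < j` unfolds to `2 ≤ j`),
  -- so `hσh` applies to `V₁' ⊔ degreeAbove V 1` as it stands.
  have hspan_sup : Submodule.span K {a₁, a₂} ⊔ (V₁' ⊔ degreeAbove V 1) = ⊤ := by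
    rw [← degreeAbove_zero hV0 htop, degreeAbove_eq_sup_succ 0, zero_add, ← hV₁'sup]
    ac_rfl
  have hσ_mem : ∀ x z, σ x z ∈ degreeAbove V 1 := by
    have hy1 : K ∙ y ≤ degreeAbove V 1 :=
      (Submodule.span_singleton_le_iff_mem _ _).mpr (le_degreeAbove (by omega) hy)
    refine fun x z => hy1 (LinearMap.apply_mem_of_sup_eq_top hspan_sup hσh ?_ x z)
    exact fun u hu v hv => hσa ▸ LinearMap.IsAlt.apply_mem_span_singleton halt hu hv
  have hstep : ∀ n x, ∀ z ∈ degreeAbove V n, deformedBracket σ t x z ∈ degreeAbove V (n + 1) := by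
    intro n x z hz
    refine add_mem (lie_mem_degreeAbove_succ hV0 htop hbr x hz) (Submodule.smul_mem _ t ?_)
    rcases n with _ | n
    · exact hσ_mem x z
    · have hz1 : z ∈ degreeAbove V 1 := degreeAbove_antitone (by omega) hz
      simp [hσh x z (.inr (Submodule.mem_sup_right hz1))]
  rw [eq_bot_iff, ← degreeAbove_eq_bot hVk]
  exact lcsOf_le_of_forall_mem_succ (degreeAbove_zero hV0 htop) hstep k

/-- For a Carnot-graded `k`-step Lie algebra, `a₁, a₂ ∈ V 1` commuting and independent,
`y ∈ V k`, and `σ` the associated deformation cochain (vanishing on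
`h = V₁' ⊕ V 2 ⊕ ⋯ ⊕ V k`), the deformed bracket `μ_t` is at most `k`-step nilpotent. -/
theorem deformed_bracket_at_most_k_step
    {K L : Type*} [Field K] [CharZero K] [LieRing L] [LieAlgebra K L]
    [FiniteDimensional K L] (k : ℕ) (hk : 2 ≤ k) (V : ℕ → Submodule K L)
    (hV0 : V 0 = ⊥) (hVk : ∀ l, k < l → V l = ⊥)
    (hdirect : DirectSum.IsInternal V)
    (hbr : ∀ i j : ℕ, ∀ x ∈ V i, ∀ y ∈ V j, ⁅x, y⁆ ∈ V (i + j))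
    (hcarnot : ∀ i < k,
      (LieModule.lowerCentralSeries K L L i : Submodule K L) = ⨆ j, ⨆ _ : i < j, V j)
    (a₁ a₂ : L) (ha₁ : a₁ ∈ V 1) (ha₂ : a₂ ∈ V 1)
    (hind : LinearIndependent K ![a₁, a₂]) (hcomm : ⁅a₁, a₂⁆ = 0)
    (y : L) (hy : y ∈ V k)
    (V₁' : Submodule K L) (hV₁'le : V₁' ≤ V 1)
    (hV₁'sup : V₁' ⊔ Submodule.span K {a₁, a₂} = V 1)
    (hV₁'inf : V₁' ⊓ Submodule.span K {a₁, a₂} = ⊥)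
    (σ : L →ₗ[K] L →ₗ[K] L) (halt : ∀ x, σ x x = 0)
    (hσa : σ a₁ a₂ = y)
    (hσh : ∀ x y' : L, x ∈ V₁' ⊔ (⨆ j, ⨆ _ : 2 ≤ j, V j) ∨
        y' ∈ V₁' ⊔ (⨆ j, ⨆ _ : 2 ≤ j, V j) → σ x y' = 0) :
    ∀ t : K, lcsOf K (deformedBracket σ t) k = ⊥ :=
  deformed_bracket_at_most_k_step_general k hk V hV0 hVk hdirect hbr a₁ a₂ y hy V₁' hV₁'sup σ halt
    hσa hσh
end

section
/- Let (g, [·,·]) be a k-step nilpotent Lie algebra with Carnot grading g = V_1 ⊕ ... ⊕ V_k, k ≥ 3, let a_1, a_2 ∈ V_1 be linearly independent with [a_1,a_2] = 0, and let y ∈ V_k with y ∉ [g^1, g^1] + [a_1, g^1] + [a_2, g^1]. Let [·,·]_t = [·,·] + t·σ be the linear deformation with σ(a_1,a_2) = y and σ vanishing on a complement as above. Then for t ≠ 0, the Lie algebra (g, [·,·]_t) admits no grading g = W_1 ⊕ ... ⊕ W_k with [W_i, W_j]_t ⊆ W_{i+j} and whose lower central series satisfies (g)^i_t = W_{i+1}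 ⊕ ... ⊕ W_k; i.e., (g, [·,·]_t) is not naturally graded. -/
/-- The span of brackets `⁅A, B⁆`. -/
def brSpan (K : Type*) {L : Type*} [Field K] [LieRing L] [LieAlgebra K L]
    (A B : Submodule K L) : Submodule K L :=
  Submodule.span K {z | ∃ x ∈ A, ∃ y ∈ B, z = ⁅x, y⁆}

/-- The span of `⁅a, B⁆`. -/
def adSpan (K : Type*) {L : Type*} [Field K] [LieRing L] [LieAlgebra K L]
    (a : L) (B : Submodule K L) : Submodule K L :=
  Submodule.span K {z | ∃ x ∈ B, z = ⁅a, x⁆}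

/-!
The cocycle `σ` vanishes as soon as one argument lies in `g¹`, and takes values in `K ∙ y`.
Since `t y = μ_t(a₁, a₂)` and `y ∈ g^{k-1} ⊆ g²`, the deformed algebra has the same derived
algebra `g¹`; and since `μ_t = ⁅·,·⁆` on `g × g¹`, its second lower central series term
contains `g²`. If `W` were a Carnot grading of `(g, μ_t)`, write `aᵢ = bᵢ + cᵢ` with
`bᵢ ∈ W 1`, `cᵢ ∈ g¹`. Then `μ_t(b₁, b₂) = ⁅b₁, b₂⁆ + t y` lies both in `W 2` and in that
second term, so it vanishes; expanding `⁅a₁ - c₁, a₂ - c₂⁆` with `⁅a₁, a₂⁆ = 0` then places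
`y` in `⁅g¹, g¹⁆ + ⁅a₁, g¹⁆ + ⁅a₂, g¹⁆`.
-/

open LieModule

namespace DirectSum.IsInternal

variable {K L : Type*} [Field K] [AddCommGroup L] [Module K L] {W : ℕ → Submodule K L}

theorem sup_iSup_one_lt_eq_top (hW : IsInternal W) (hW0 : W 0 = ⊥) :
    W 1 ⊔ ⨆ j, ⨆ _ : 1 < j, W j = ⊤ := by
  rw [eq_top_iff, ← hW.submodule_iSup_eq_top]
  refine iSup_le fun j => ?_
  match j with
  | 0 => simp [hW0]
  | 1 => exact le_sup_left
  | j + 2 =>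
    exact (le_iSup₂ (f := fun j (_ : 1 < j) => W j) (j + 2) (by omega)).trans le_sup_right

theorem exists_mem_iSup_one_lt_sub_mem (hW : IsInternal W) (hW0 : W 0 = ⊥) (a : L) :
    ∃ c ∈ ⨆ j, ⨆ _ : 1 < j, W j, a - c ∈ W 1 := by
  obtain ⟨b, hb, c, hc, rfl⟩ :=
    Submodule.mem_sup.1 ((hW.sup_iSup_one_lt_eq_top hW0).ge (Submodule.mem_top (x := a)))
  exact ⟨c, hc, by rwa [add_sub_cancel_right]⟩

theorem disjoint_iSup_lt (hW : IsInternal W) (i : ℕ) :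
    Disjoint (W i) (⨆ j, ⨆ _ : i < j, W j) :=
  (hW.submodule_iSupIndep i).mono_right <|
    iSup₂_le fun j hj => le_iSup₂ (f := fun j (_ : j ≠ i) => W j) j hj.ne'

end DirectSum.IsInternal

theorem LinearMap.IsAlt.apply_mem_span_singleton_s4 {K L M : Type*} [Field K] [AddCommGroup L]
    [Module K L] [AddCommGroup M] [Module K M] {σ : L →ₗ[K] L →ₗ[K] M} (hσ : σ.IsAlt)
    {a₁ a₂ : L} {Z : Submodule K L} (hZ : Submodule.span K {a₁, a₂} ⊔ Z = ⊤)
    (hσZ : ∀ x z, x ∈ Z ∨ z ∈ Z → σ x z = 0) (x z : L) :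
    σ x z ∈ K ∙ σ a₁ a₂ := by
  obtain ⟨p, hp, q, hq, rfl⟩ := Submodule.mem_sup.1 (hZ.ge (Submodule.mem_top (x := x)))
  obtain ⟨p', hp', q', hq', rfl⟩ := Submodule.mem_sup.1 (hZ.ge (Submodule.mem_top (x := z)))
  obtain ⟨α, β, rfl⟩ := Submodule.mem_span_pair.1 hp
  obtain ⟨γ, δ, rfl⟩ := Submodule.mem_span_pair.1 hp'
  refine Submodule.mem_span_singleton.2 ⟨α * δ - β * γ, ?_⟩
  simp only [map_add, map_smul, LinearMap.add_apply, LinearMap.smul_apply, hσ.self_eq_zero,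
    ← hσ.neg a₁ a₂, hσZ q _ (.inl hq), hσZ _ q' (.inr hq')]
  module

section LieAlgebra

variable {K L : Type*} [Field K] [LieRing L] [LieAlgebra K L]

theorem LieModule.coe_lowerCentralSeries_succ (n : ℕ) :
    (lowerCentralSeries K L L (n + 1) : Submodule K L) =
      Submodule.span K {m | ∃ x : L, ∃ c ∈ lowerCentralSeries K L L n, ⁅x, c⁆ = m} := by
  rw [lowerCentralSeries_succ, LieIdeal.toLieSubalgebra_toSubmodule,
    LieSubmodule.lieIdeal_oper_eq_linear_span']
  simp only [LieSubmodule.mem_top, true_and]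

theorem LieModule.lie_mem_lowerCentralSeries_succ (x : L) {c : L} {n : ℕ}
    (hc : c ∈ lowerCentralSeries K L L n) : ⁅x, c⁆ ∈ lowerCentralSeries K L L (n + 1) := by
  rw [lowerCentralSeries_succ]
  exact LieSubmodule.lie_mem_lie (LieSubmodule.mem_top x) hc

theorem brSpan_le_lowerCentralSeries_succ (A : Submodule K L) (n : ℕ) :
    brSpan K A (lowerCentralSeries K L L n) ≤ lowerCentralSeries K L L (n + 1) :=
  Submodule.span_le.2 fun _ ⟨x, _, _, hc, hz⟩ => hz ▸ lie_mem_lowerCentralSeries_succ x hc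

theorem adSpan_le_lowerCentralSeries_succ (a : L) (n : ℕ) :
    adSpan K a (lowerCentralSeries K L L n) ≤ lowerCentralSeries K L L (n + 1) :=
  Submodule.span_le.2 fun _ ⟨_, hc, hz⟩ => hz ▸ lie_mem_lowerCentralSeries_succ a hc

theorem lie_sub_sub_mem_brSpan_sup_adSpan {A : Submodule K L} {a₁ a₂ c₁ c₂ : L}
    (hcomm : ⁅a₁, a₂⁆ = 0) (hc₁ : c₁ ∈ A) (hc₂ : c₂ ∈ A) :
    ⁅a₁ - c₁, a₂ - c₂⁆ ∈ brSpan K A A ⊔ adSpan K a₁ A ⊔ adSpan K a₂ A := by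
  have h : ⁅a₁ - c₁, a₂ - c₂⁆ = ⁅c₁, c₂⁆ - ⁅a₁, c₂⁆ + ⁅a₂, c₁⁆ := by
    rw [sub_lie, lie_sub, lie_sub, hcomm, ← lie_skew a₂ c₁]
    abel
  rw [h]
  refine add_mem (sub_mem ?_ ?_) ?_
  · exact Submodule.mem_sup_left <| Submodule.mem_sup_left <|
      Submodule.subset_span ⟨c₁, hc₁, c₂, hc₂, rfl⟩
  · exact Submodule.mem_sup_left <| Submodule.mem_sup_right <|
      Submodule.subset_span ⟨c₂, hc₂, rfl⟩
  · exact Submodule.mem_sup_right <| Submodule.subset_span ⟨c₁, hc₁, rfl⟩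

theorem apply_mem_lcsOf_succ {B : L → L → L} (x : L) {z : L} {n : ℕ}
    (hz : z ∈ lcsOf K B n) : B x z ∈ lcsOf K B (n + 1) :=
  Submodule.subset_span ⟨x, z, hz, rfl⟩

variable {σ : L →ₗ[K] L →ₗ[K] L} {t : K}

theorem lcsOf_deformedBracket_one_eq {S : Submodule K L} (hσS : ∀ x z, σ x z ∈ S)
    (hS₁ : S ≤ lowerCentralSeries K L L 1) (hS : S ≤ lcsOf K (deformedBracket σ t) 1) :
    lcsOf K (deformedBracket σ t) 1 = lowerCentralSeries K L L 1 := by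
  apply le_antisymm
  · refine Submodule.span_le.2 fun _ ⟨x, z, _, hz⟩ => hz ▸
      add_mem ?_ (hS₁ (S.smul_mem t (hσS x z)))
    exact lie_mem_lowerCentralSeries_succ x (LieSubmodule.mem_top z)
  · rw [coe_lowerCentralSeries_succ]
    refine Submodule.span_le.2 fun _ ⟨x, c, _, hc⟩ => hc ▸ ?_
    have h : ⁅x, c⁆ = deformedBracket σ t x c - t • σ x c := (add_sub_cancel_right _ _).symm
    rw [SetLike.mem_coe, h]
    exact sub_mem (apply_mem_lcsOf_succ x Submodule.mem_top) (hS (S.smul_mem t (hσS x c)))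

theorem lcsOf_deformedBracket_one_eq_of_mem_span {a₁ a₂ : L} (ht : t ≠ 0)
    (hcomm : ⁅a₁, a₂⁆ = 0) (hσ : ∀ x z, σ x z ∈ K ∙ σ a₁ a₂)
    (h₁ : σ a₁ a₂ ∈ lowerCentralSeries K L L 1) :
    lcsOf K (deformedBracket σ t) 1 = lowerCentralSeries K L L 1 := by
  have h : deformedBracket σ t a₁ a₂ = t • σ a₁ a₂ := by simp [deformedBracket, hcomm]
  have hB : deformedBracket σ t a₁ a₂ ∈ lcsOf K (deformedBracket σ t) 1 :=
    apply_mem_lcsOf_succ (n := 0) a₁ Submodule.mem_top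
  rw [h, Submodule.smul_mem_iff _ ht] at hB
  exact lcsOf_deformedBracket_one_eq hσ ((Submodule.span_singleton_le_iff_mem _ _).2 h₁)
    ((Submodule.span_singleton_le_iff_mem _ _).2 hB)

theorem lowerCentralSeries_two_le_lcsOf_two
    (hσ : ∀ x c, c ∈ lowerCentralSeries K L L 1 → σ x c = 0)
    (h₁ : lcsOf K (deformedBracket σ t) 1 = lowerCentralSeries K L L 1) :
    lowerCentralSeries K L L 2 ≤ lcsOf K (deformedBracket σ t) 2 := by
  rw [coe_lowerCentralSeries_succ]
  refine Submodule.span_le.2 fun _ ⟨x, c, hc, hxc⟩ => hxc ▸ ?_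
  have h : ⁅x, c⁆ = deformedBracket σ t x c := by simp [deformedBracket, hσ x c hc]
  exact h ▸ apply_mem_lcsOf_succ x (h₁ ▸ hc)

end LieAlgebra

theorem deformed_algebra_not_naturally_graded_general
    {K L : Type*} [Field K] [LieRing L] [LieAlgebra K L]
    (k : ℕ) (hk : 3 ≤ k) (V : ℕ → Submodule K L)
    (hV0 : V 0 = ⊥)
    (hdirect : DirectSum.IsInternal V)
    (hcarnot : ∀ i < k,
      (LieModule.lowerCentralSeries K L L i : Submodule K L) = ⨆ j, ⨆ _ : i < j, V j)
    (a₁ a₂ : L)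
    (hcomm : ⁅a₁, a₂⁆ = 0)
    (y : L) (hy : y ∈ V k)
    (hynot : y ∉ brSpan K (LieModule.lowerCentralSeries K L L 1 : Submodule K L)
          (LieModule.lowerCentralSeries K L L 1 : Submodule K L) ⊔
        adSpan K a₁ (LieModule.lowerCentralSeries K L L 1 : Submodule K L) ⊔
        adSpan K a₂ (LieModule.lowerCentralSeries K L L 1 : Submodule K L))
    (V₁' : Submodule K L)
    (hV₁'sup : V₁' ⊔ Submodule.span K {a₁, a₂} = V 1)
    (σ : L →ₗ[K] L →ₗ[K] L) (halt : ∀ x, σ x x = 0)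
    (hσa : σ a₁ a₂ = y)
    (hσh : ∀ x y' : L, x ∈ V₁' ⊔ (⨆ j, ⨆ _ : 2 ≤ j, V j) ∨
        y' ∈ V₁' ⊔ (⨆ j, ⨆ _ : 2 ≤ j, V j) → σ x y' = 0) :
    ∀ t : K, t ≠ 0 →
      ¬ ∃ W : ℕ → Submodule K L,
          W 0 = ⊥ ∧ (∀ l, k < l → W l = ⊥) ∧ DirectSum.IsInternal W ∧
          (∀ i j : ℕ, ∀ x ∈ W i, ∀ y' ∈ W j,
            deformedBracket σ t x y' ∈ W (i + j)) ∧
          (∀ i < k, lcsOf K (deformedBracket σ t) i = ⨆ j, ⨆ _ : i < j, W j) := by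
  rintro t ht ⟨W, hW0, -, hWint, hWbr, hWlcs⟩
  set B := deformedBracket σ t
  set g₁ := (lowerCentralSeries K L L 1 : Submodule K L)
  have hσg₁ : ∀ x c, c ∈ g₁ → σ x c = 0 ∧ σ c x = 0 := fun x c hc => by
    have hcZ : c ∈ V₁' ⊔ ⨆ j, ⨆ _ : 2 ≤ j, V j :=
      Submodule.mem_sup_right (hcarnot 1 (by omega) ▸ hc)
    exact ⟨hσh x c (.inr hcZ), hσh c x (.inl hcZ)⟩
  have hσy : ∀ x z, σ x z ∈ K ∙ y := hσa ▸ LinearMap.IsAlt.apply_mem_span_singleton_s4 halt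
    (by rw [← sup_assoc, sup_comm (Submodule.span K _), hV₁'sup]
        exact hdirect.sup_iSup_one_lt_eq_top hV0) hσh
  have hy₂ : y ∈ lowerCentralSeries K L L 2 := by
    have h : y ∈ (lowerCentralSeries K L L (k - 1) : Submodule K L) := by
      rw [hcarnot (k - 1) (by omega)]
      exact le_iSup₂ (f := fun j (_ : k - 1 < j) => V j) k (by omega) hy
    exact antitone_lowerCentralSeries K L L (by omega : 2 ≤ k - 1) h
  have hB₁ : lcsOf K B 1 = g₁ := lcsOf_deformedBracket_one_eq_of_mem_span ht hcomm
    (hσa ▸ hσy) (hσa ▸ antitone_lowerCentralSeries K L L (by omega) hy₂)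
  have hB₂ : (lowerCentralSeries K L L 2 : Submodule K L) ≤ lcsOf K B 2 :=
    lowerCentralSeries_two_le_lcsOf_two (fun x c hc => (hσg₁ x c hc).1) hB₁
  obtain ⟨c₁, hc₁, hb₁⟩ := hWint.exists_mem_iSup_one_lt_sub_mem hW0 a₁
  obtain ⟨c₂, hc₂, hb₂⟩ := hWint.exists_mem_iSup_one_lt_sub_mem hW0 a₂
  rw [← hWlcs 1 (by omega), hB₁] at hc₁ hc₂
  have hM := lie_sub_sub_mem_brSpan_sup_adSpan hcomm hc₁ hc₂
  have hσb : σ (a₁ - c₁) (a₂ - c₂) = y := by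
    simp [(hσg₁ _ _ hc₁).2, (hσg₁ _ _ hc₂).1, hσa]
  have hB : B (a₁ - c₁) (a₂ - c₂) = 0 := by
    refine Submodule.disjoint_def.1 (hWint.disjoint_iSup_lt 2) _ (hWbr 1 1 _ hb₁ _ hb₂) ?_
    rw [← hWlcs 2 (by omega)]
    refine add_mem (hB₂ ?_) (Submodule.smul_mem _ t (hσb ▸ hB₂ hy₂))
    exact (sup_le (sup_le (brSpan_le_lowerCentralSeries_succ g₁ 1)
      (adSpan_le_lowerCentralSeries_succ a₁ 1)) (adSpan_le_lowerCentralSeries_succ a₂ 1)) hM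
  have hty : t • y = -⁅a₁ - c₁, a₂ - c₂⁆ := eq_neg_of_add_eq_zero_right (hσb ▸ hB)
  exact hynot <| (Submodule.smul_mem_iff _ ht).1 (hty ▸ neg_mem hM)

/-- Main deformation theorem: for `k ≥ 3`, a Carnot-graded `k`-step nilpotent Lie algebra,
commuting independent `a₁, a₂ ∈ V 1`, and `y ∈ V k` with
`y ∉ ⁅g¹,g¹⁆ + ⁅a₁,g¹⁆ + ⁅a₂,g¹⁆`, the deformed algebra `(g, μ_t)` for `t ≠ 0` admits no
Carnot grading, i.e. is not naturally graded. -/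
theorem deformed_algebra_not_naturally_graded
    {K L : Type*} [Field K] [CharZero K] [IsAlgClosed K] [LieRing L] [LieAlgebra K L]
    [FiniteDimensional K L] (k : ℕ) (hk : 3 ≤ k) (V : ℕ → Submodule K L)
    (hV0 : V 0 = ⊥) (hVk : ∀ l, k < l → V l = ⊥)
    (hdirect : DirectSum.IsInternal V)
    (hbr : ∀ i j : ℕ, ∀ x ∈ V i, ∀ y ∈ V j, ⁅x, y⁆ ∈ V (i + j))
    (hcarnot : ∀ i < k,
      (LieModule.lowerCentralSeries K L L i : Submodule K L) = ⨆ j, ⨆ _ : i < j, V j)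
    (hknontriv : V k ≠ ⊥)
    (a₁ a₂ : L) (ha₁ : a₁ ∈ V 1) (ha₂ : a₂ ∈ V 1)
    (hind : LinearIndependent K ![a₁, a₂]) (hcomm : ⁅a₁, a₂⁆ = 0)
    (y : L) (hy : y ∈ V k)
    (hynot : y ∉ brSpan K (LieModule.lowerCentralSeries K L L 1 : Submodule K L)
          (LieModule.lowerCentralSeries K L L 1 : Submodule K L) ⊔
        adSpan K a₁ (LieModule.lowerCentralSeries K L L 1 : Submodule K L) ⊔
        adSpan K a₂ (LieModule.lowerCentralSeries K L L 1 : Submodule K L))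
    (V₁' : Submodule K L) (hV₁'le : V₁' ≤ V 1)
    (hV₁'sup : V₁' ⊔ Submodule.span K {a₁, a₂} = V 1)
    (hV₁'inf : V₁' ⊓ Submodule.span K {a₁, a₂} = ⊥)
    (σ : L →ₗ[K] L →ₗ[K] L) (halt : ∀ x, σ x x = 0)
    (hσa : σ a₁ a₂ = y)
    (hσh : ∀ x y' : L, x ∈ V₁' ⊔ (⨆ j, ⨆ _ : 2 ≤ j, V j) ∨
        y' ∈ V₁' ⊔ (⨆ j, ⨆ _ : 2 ≤ j, V j) → σ x y' = 0) :
    ∀ t : K, t ≠ 0 →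
      ¬ ∃ W : ℕ → Submodule K L,
          W 0 = ⊥ ∧ (∀ l, k < l → W l = ⊥) ∧ DirectSum.IsInternal W ∧
          (∀ i j : ℕ, ∀ x ∈ W i, ∀ y' ∈ W j,
            deformedBracket σ t x y' ∈ W (i + j)) ∧
          (∀ i < k, lcsOf K (deformedBracket σ t) i = ⨆ j, ⨆ _ : i < j, W j) :=
  deformed_algebra_not_naturally_graded_general k hk V hV0 hdirect hcarnot a₁ a₂ hcomm y hy hynot
    V₁' hV₁'sup σ halt hσa hσh
end

section
/- Let (g, [·,·]_t) be as in the previous deformation setup with deformed bracket [·,·]_t and suppose g = W_1 ⊕ ... ⊕ W_k is a grading of (g, [·,·]_t) with [W_i,W_j]_t ⊆ W_{i+j} and W_j ⊕ ... ⊕ W_k = V_j ⊕ ... ⊕ V_k for all j. Write a_1 = w_1 + b and a_2 = w_1' + c with w_1, w_1' ∈ W_1 and b, c ∈ [g,g]. If k ≥ 3 and [w_1, w_1']_t = 0, then t·y = [a_1, c] − [b, c] + [b, a_2], and hence t·y ∈ [g^1, g^1] + [a_1, g^1] + [a_2, g^1]. -/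
/-!
Both `b` and `c` lie in `[g, g] = V₂ ⊕ ⋯ ⊕ V_k`, where `σ` vanishes, so expanding
`[a₁, a₂]_t = [w₁ + b, w₁' + c]_t` bilinearly leaves only the undeformed brackets involving
`b` or `c` besides `[w₁, w₁']_t = 0`. Since `[a₁, a₂] = 0`, the left side is `t • y`.
-/

section

variable {K L : Type*} [Field K] [LieRing L] [LieAlgebra K L]

theorem deformedBracket_add_add {σ : L →ₗ[K] L →ₗ[K] L} {b c : L}
    (hb : ∀ z, σ b z = 0) (hc : ∀ z, σ z c = 0) (t : K) (w w' : L) :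
    deformedBracket σ t (w + b) (w' + c) =
      deformedBracket σ t w w' + ⁅w + b, c⁆ - ⁅b, c⁆ + ⁅b, w' + c⁆ := by
  simp only [deformedBracket, map_add, LinearMap.add_apply, hb, hc, add_zero,
    lie_add, add_lie]
  abel

variable {A B : Submodule K L}

theorem lie_mem_brSpan {x y : L} (hx : x ∈ A) (hy : y ∈ B) : ⁅x, y⁆ ∈ brSpan K A B :=
  Submodule.subset_span ⟨x, hx, y, hy, rfl⟩

theorem lie_mem_adSpan (a : L) {x : L} (hx : x ∈ B) : ⁅a, x⁆ ∈ adSpan K a B :=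
  Submodule.subset_span ⟨x, hx, rfl⟩

theorem lie_mem_adSpan_swap (a : L) {x : L} (hx : x ∈ B) : ⁅x, a⁆ ∈ adSpan K a B := by
  rw [← neg_neg ⁅x, a⁆, lie_skew]
  exact neg_mem (lie_mem_adSpan a hx)

theorem lie_sub_lie_add_lie_mem_brSpan_sup_adSpan (a₁ a₂ : L) {b c : L}
    (hb : b ∈ A) (hc : c ∈ A) :
    ⁅a₁, c⁆ - ⁅b, c⁆ + ⁅b, a₂⁆ ∈ brSpan K A A ⊔ adSpan K a₁ A ⊔ adSpan K a₂ A :=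
  add_mem
    (sub_mem (Submodule.mem_sup_left (Submodule.mem_sup_right (lie_mem_adSpan a₁ hc)))
      (Submodule.mem_sup_left (Submodule.mem_sup_left (lie_mem_brSpan hb hc))))
    (Submodule.mem_sup_right (lie_mem_adSpan_swap a₂ hb))

end

theorem deformed_grading_forces_ty_in_subspace_general
    {K L : Type*} [Field K] [LieRing L] [LieAlgebra K L]
    (k : ℕ) (hk : 3 ≤ k) (V : ℕ → Submodule K L)
    (hcarnot : ∀ i < k,
      (LieModule.lowerCentralSeries K L L i : Submodule K L) = ⨆ j, ⨆ _ : i < j, V j)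
    (a₁ a₂ : L)
    (hcomm : ⁅a₁, a₂⁆ = 0)
    (y : L)
    (V₁' : Submodule K L)
    (σ : L →ₗ[K] L →ₗ[K] L)
    (hσa : σ a₁ a₂ = y)
    (hσh : ∀ x y' : L, x ∈ V₁' ⊔ (⨆ j, ⨆ _ : 2 ≤ j, V j) ∨
        y' ∈ V₁' ⊔ (⨆ j, ⨆ _ : 2 ≤ j, V j) → σ x y' = 0)
    (t : K)
    (w₁ w₁' b c : L)
    (hb : b ∈ (LieModule.lowerCentralSeries K L L 1 : Submodule K L))
    (hc : c ∈ (LieModule.lowerCentralSeries K L L 1 : Submodule K L))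
    (ha₁dec : a₁ = w₁ + b) (ha₂dec : a₂ = w₁' + c)
    (hw : deformedBracket σ t w₁ w₁' = 0) :
    t • y = ⁅a₁, c⁆ - ⁅b, c⁆ + ⁅b, a₂⁆ ∧
      t • y ∈ brSpan K (LieModule.lowerCentralSeries K L L 1 : Submodule K L)
            (LieModule.lowerCentralSeries K L L 1 : Submodule K L) ⊔
          adSpan K a₁ (LieModule.lowerCentralSeries K L L 1 : Submodule K L) ⊔
          adSpan K a₂ (LieModule.lowerCentralSeries K L L 1 : Submodule K L) := by
  have hderived : (LieModule.lowerCentralSeries K L L 1 : Submodule K L) ≤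
      V₁' ⊔ ⨆ j, ⨆ _ : 2 ≤ j, V j := by
    rw [hcarnot 1 (by omega)]
    exact le_sup_right
  have hσb : ∀ z, σ b z = 0 := fun z => hσh b z (Or.inl (hderived hb))
  have hσc : ∀ z, σ z c = 0 := fun z => hσh z c (Or.inr (hderived hc))
  have hty : t • y = ⁅a₁, c⁆ - ⁅b, c⁆ + ⁅b, a₂⁆ :=
    calc t • y = deformedBracket σ t a₁ a₂ := by rw [deformedBracket, hcomm, hσa, zero_add]
      _ = ⁅a₁, c⁆ - ⁅b, c⁆ + ⁅b, a₂⁆ := by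
        rw [ha₁dec, ha₂dec, deformedBracket_add_add hσb hσc, hw, zero_add]
  exact ⟨hty, hty ▸ lie_sub_lie_add_lie_mem_brSpan_sup_adSpan a₁ a₂ hb hc⟩

/-- Key computation: if the deformed algebra had a Carnot-type grading `W` with
`W_j ⊕ ⋯ ⊕ W_k = V_j ⊕ ⋯ ⊕ V_k` and `a₁ = w₁ + b`, `a₂ = w₁' + c` with
`w₁, w₁' ∈ W 1`, `b, c ∈ [g,g]`, and `[w₁, w₁']_t = 0` (forced when `k ≥ 3`), then
`t • y = ⁅a₁,c⁆ − ⁅b,c⁆ + ⁅b,a₂⁆ ∈ ⁅g¹,g¹⁆ + ⁅a₁,g¹⁆ + ⁅a₂,g¹⁆`. -/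
theorem deformed_grading_forces_ty_in_subspace
    {K L : Type*} [Field K] [CharZero K] [LieRing L] [LieAlgebra K L]
    [FiniteDimensional K L] (k : ℕ) (hk : 3 ≤ k) (V : ℕ → Submodule K L)
    (hV0 : V 0 = ⊥) (hVk : ∀ l, k < l → V l = ⊥)
    (hdirect : DirectSum.IsInternal V)
    (hbr : ∀ i j : ℕ, ∀ x ∈ V i, ∀ y ∈ V j, ⁅x, y⁆ ∈ V (i + j))
    (hcarnot : ∀ i < k,
      (LieModule.lowerCentralSeries K L L i : Submodule K L) = ⨆ j, ⨆ _ : i < j, V j)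
    (a₁ a₂ : L) (ha₁ : a₁ ∈ V 1) (ha₂ : a₂ ∈ V 1)
    (hind : LinearIndependent K ![a₁, a₂]) (hcomm : ⁅a₁, a₂⁆ = 0)
    (y : L) (hy : y ∈ V k)
    (V₁' : Submodule K L) (hV₁'le : V₁' ≤ V 1)
    (hV₁'sup : V₁' ⊔ Submodule.span K {a₁, a₂} = V 1)
    (hV₁'inf : V₁' ⊓ Submodule.span K {a₁, a₂} = ⊥)
    (σ : L →ₗ[K] L →ₗ[K] L) (halt : ∀ x, σ x x = 0)
    (hσa : σ a₁ a₂ = y)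
    (hσh : ∀ x y' : L, x ∈ V₁' ⊔ (⨆ j, ⨆ _ : 2 ≤ j, V j) ∨
        y' ∈ V₁' ⊔ (⨆ j, ⨆ _ : 2 ≤ j, V j) → σ x y' = 0)
    (t : K)
    (W : ℕ → Submodule K L)
    (hW0 : W 0 = ⊥) (hWk : ∀ l, k < l → W l = ⊥)
    (hWdirect : DirectSum.IsInternal W)
    (hWbr : ∀ i j : ℕ, ∀ x ∈ W i, ∀ y' ∈ W j,
      deformedBracket σ t x y' ∈ W (i + j))
    (hWV : ∀ j : ℕ, (⨆ i, ⨆ _ : j ≤ i, W i) = ⨆ i, ⨆ _ : j ≤ i, V i)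
    (w₁ w₁' b c : L) (hw₁ : w₁ ∈ W 1) (hw₁' : w₁' ∈ W 1)
    (hb : b ∈ (LieModule.lowerCentralSeries K L L 1 : Submodule K L))
    (hc : c ∈ (LieModule.lowerCentralSeries K L L 1 : Submodule K L))
    (ha₁dec : a₁ = w₁ + b) (ha₂dec : a₂ = w₁' + c)
    (hw : deformedBracket σ t w₁ w₁' = 0) :
    t • y = ⁅a₁, c⁆ - ⁅b, c⁆ + ⁅b, a₂⁆ ∧
      t • y ∈ brSpan K (LieModule.lowerCentralSeries K L L 1 : Submodule K L)
            (LieModule.lowerCentralSeries K L L 1 : Submodule K L) ⊔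
          adSpan K a₁ (LieModule.lowerCentralSeries K L L 1 : Submodule K L) ⊔
          adSpan K a₂ (LieModule.lowerCentralSeries K L L 1 : Submodule K L) :=
  deformed_grading_forces_ty_in_subspace_general k hk V hcarnot a₁ a₂ hcomm y V₁' σ hσa hσh t w₁ w₁'
    b c hb hc ha₁dec ha₂dec hw
end

section
/- Let n be a 2-step nilpotent Lie algebra with bracket μ, decomposed as n = v ⊕ z where z is the center. Suppose v, w ∈ v are linearly independent, μ(v, w) = 0, and there exists z ∈ z not belonging to the span of {μ(v, x) : x ∈ n} ∪ {μ(w, x) : x ∈ n}. Then the 2-cochain φ = v* ∧ w* ⊗ z is not in the image of the Chevalley–Eilenberg differential δ¹, i.e., there is no linear map f : n → n with φ(x, y) = μ(f(x), y) + μ(x, f(y)) − f(μ(x, y)) for all x, y. -/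
theorem coboundary_apply_mem_span_of_lie_eq_zero {K L : Type*} [CommRing K] [LieRing L]
    [LieAlgebra K L] (f : L →ₗ[K] L) {v w : L} (hvw : ⁅v, w⁆ = 0) :
    ⁅f v, w⁆ + ⁅v, f w⁆ - f ⁅v, w⁆ ∈
      Submodule.span K ({u | ∃ x : L, u = ⁅v, x⁆} ∪ {u | ∃ x : L, u = ⁅w, x⁆}) := by
  have hsplit : ⁅f v, w⁆ + ⁅v, f w⁆ - f ⁅v, w⁆ = ⁅v, f w⁆ - ⁅w, f v⁆ := by
    rw [hvw, map_zero, ← lie_skew w (f v)]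
    abel
  rw [hsplit]
  exact Submodule.sub_mem _ (Submodule.subset_span (Or.inl ⟨f w, rfl⟩))
    (Submodule.subset_span (Or.inr ⟨f v, rfl⟩))

theorem cochain_not_coboundary_general
    {K L : Type*} [Field K] [LieRing L] [LieAlgebra K L]
    (v w : L) (hvw : ⁅v, w⁆ = 0)
    (z : L)
    (hznot : z ∉ Submodule.span K
      ({u | ∃ x : L, u = ⁅v, x⁆} ∪ {u | ∃ x : L, u = ⁅w, x⁆}))
    (vstar wstar : L →ₗ[K] K)
    (hvv : vstar v = 1) (hvw' : vstar w = 0)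
    (hwv : wstar v = 0) (hww : wstar w = 1) :
    ¬ ∃ f : L →ₗ[K] L, ∀ x y : L,
        (vstar x * wstar y - vstar y * wstar x) • z =
          ⁅f x, y⁆ + ⁅x, f y⁆ - f ⁅x, y⁆ := by
  rintro ⟨f, hf⟩
  have hz : z = ⁅f v, w⁆ + ⁅v, f w⁆ - f ⁅v, w⁆ := by
    simpa [hvv, hvw', hwv, hww] using hf v w
  exact hznot (hz ▸ coboundary_apply_mem_span_of_lie_eq_zero f hvw)

/-- Non-coboundary criterion for 2-step nilpotent Lie algebras: if `v, w` are independent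
elements of a complement of the center with `⁅v,w⁆ = 0` and `z` is a central element not in
`span(⁅v,n⁆ ∪ ⁅w,n⁆)`, then the 2-cochain `v* ∧ w* ⊗ z` is not a Chevalley–Eilenberg
coboundary. -/
theorem cochain_not_coboundary
    {K L : Type*} [Field K] [CharZero K] [LieRing L] [LieAlgebra K L]
    [FiniteDimensional K L]
    (h2 : LieModule.lowerCentralSeries K L L 2 = ⊥)
    (h1 : LieModule.lowerCentralSeries K L L 1 ≠ ⊥)
    (Vc : Submodule K L)
    (hcompl : IsCompl Vc (LieAlgebra.center K L : Submodule K L))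
    (v w : L) (hv : v ∈ Vc) (hw : w ∈ Vc)
    (hind : LinearIndependent K ![v, w]) (hvw : ⁅v, w⁆ = 0)
    (z : L) (hz : z ∈ LieAlgebra.center K L)
    (hznot : z ∉ Submodule.span K
      ({u | ∃ x : L, u = ⁅v, x⁆} ∪ {u | ∃ x : L, u = ⁅w, x⁆}))
    (vstar wstar : L →ₗ[K] K)
    (hvv : vstar v = 1) (hvw' : vstar w = 0)
    (hwv : wstar v = 0) (hww : wstar w = 1) :
    ¬ ∃ f : L →ₗ[K] L, ∀ x y : L,
        (vstar x * wstar y - vstar y * wstar x) • z =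
          ⁅f x, y⁆ + ⁅x, f y⁆ - f ⁅x, y⁆ :=
  cochain_not_coboundary_general v w hvw z hznot vstar wstar hvv hvw' hwv hww
end

section
/- Let g be the 2-step nilpotent Lie algebra associated to the 4-cycle graph: g has basis v_1, v_2, v_3, v_4, z_{12}, z_{23}, z_{34}, z_{41} with nonzero brackets [v_1,v_2] = z_{12}, [v_2,v_3] = z_{23}, [v_3,v_4] = z_{34}, [v_4,v_1] = z_{41}, and [v_1,v_3] = [v_2,v_4] = 0, all z_{ij} central. If σ is an alternating bilinear map g × g → g satisfying μ(σ(x,y), w) + σ(μ(x,y), w) = 0 for all x, y, w ∈ g (i.e., σ ∈ ker η₂), then σ(v_1, v_3) and σ(v_2, v_4) belong to the center of g. -/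
theorem LieAlgebra.apply_mem_center_of_lie_eq_zero {R L : Type*} [CommRing R] [LieRing L]
    [LieAlgebra R L] (σ : L →ₗ[R] L →ₗ[R] L) {a b : L}
    (hσ : ∀ w : L, ⁅σ a b, w⁆ + σ ⁅a, b⁆ w = 0) (hab : ⁅a, b⁆ = 0) :
    σ a b ∈ LieAlgebra.center R L := by
  intro w
  have hσw : ⁅σ a b, w⁆ = 0 := by
    simpa only [hab, map_zero, LinearMap.zero_apply, add_zero] using hσ w
  rw [← lie_skew, hσw, neg_zero]

theorem four_cycle_ker_eta_central_values_general
    {K L : Type*} [Field K] [LieRing L] [LieAlgebra K L]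
    (v₁ v₂ v₃ v₄ : L)
    (h13 : ⁅v₁, v₃⁆ = 0) (h24 : ⁅v₂, v₄⁆ = 0)
    (σ : L →ₗ[K] L →ₗ[K] L)
    (hker : ∀ x y w : L, ⁅σ x y, w⁆ + σ ⁅x, y⁆ w = 0) :
    σ v₁ v₃ ∈ LieAlgebra.center K L ∧ σ v₂ v₄ ∈ LieAlgebra.center K L :=
  ⟨LieAlgebra.apply_mem_center_of_lie_eq_zero σ (hker v₁ v₃) h13,
    LieAlgebra.apply_mem_center_of_lie_eq_zero σ (hker v₂ v₄) h24⟩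

/-- In the 2-step nilpotent Lie algebra of the 4-cycle graph, any `σ ∈ ker η₂` sends the
non-adjacent pairs `(v₁,v₃)` and `(v₂,v₄)` into the center. -/
theorem four_cycle_ker_eta_central_values
    {K L : Type*} [Field K] [CharZero K] [LieRing L] [LieAlgebra K L]
    (v₁ v₂ v₃ v₄ z₁₂ z₂₃ z₃₄ z₄₁ : L)
    (hind : LinearIndependent K ![v₁, v₂, v₃, v₄, z₁₂, z₂₃, z₃₄, z₄₁])
    (hspan : Submodule.span K
      (Set.range ![v₁, v₂, v₃, v₄, z₁₂, z₂₃, z₃₄, z₄₁]) = ⊤)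
    (h12 : ⁅v₁, v₂⁆ = z₁₂) (h23 : ⁅v₂, v₃⁆ = z₂₃)
    (h34 : ⁅v₃, v₄⁆ = z₃₄) (h41 : ⁅v₄, v₁⁆ = z₄₁)
    (h13 : ⁅v₁, v₃⁆ = 0) (h24 : ⁅v₂, v₄⁆ = 0)
    (hcent : ∀ x : L, ⁅z₁₂, x⁆ = 0 ∧ ⁅z₂₃, x⁆ = 0 ∧ ⁅z₃₄, x⁆ = 0 ∧ ⁅z₄₁, x⁆ = 0)
    (σ : L →ₗ[K] L →ₗ[K] L) (halt : ∀ x, σ x x = 0)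
    (hker : ∀ x y w : L, ⁅σ x y, w⁆ + σ ⁅x, y⁆ w = 0) :
    σ v₁ v₃ ∈ LieAlgebra.center K L ∧ σ v₂ v₄ ∈ LieAlgebra.center K L :=
  four_cycle_ker_eta_central_values_general v₁ v₂ v₃ v₄ h13 h24 σ hker
end

section
/- Let g be the 2-step nilpotent Lie algebra of the 4-cycle graph with bracket μ as above. Then every alternating bilinear map σ : g × g → g satisfying η₂(σ) = 0 (where η₂(σ)(x,y,w) = μ(σ(x,y),w) + σ(μ(x,y),w)) lies in the image of the Chevalley–Eilenberg differential δ¹: there exists a linear map f : g → g with σ(x,y) = μ(f(x),y) + μ(x,f(y)) − f(μ(x,y)) for all x, y ∈ g. Consequently H²_{2-nil}(μ,μ) = ker(η₂)/Im(δ¹) = 0. -/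
/-!
In a 2-step nilpotent Lie algebra every coboundary `δ¹ f` lies in `ker η₂`, and an alternating
`ρ ∈ ker η₂` is determined by its values on pairs of generators, because `η₂ ρ = 0` forces
`ρ [x, y] w = -[ρ x y, w]`. So it suffices to find `f` with `δ¹ f = σ` on the pairs `(vᵢ, vⱼ)`.
On an edge `ij` this holds with `f z_ij = -σ vᵢ vⱼ` as soon as `f` maps `v₁, v₃` into
`span {v₂, v₄}` and `v₂, v₄` into `span {v₁, v₃}`, which kills the bracket terms. On a diagonal,
`[v₁, v₃] = 0` makes `σ v₁ v₃` central, hence a combination of the `z`'s, and every such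
combination is `[f v₁, v₃] + [v₁, f v₃]` for a suitable choice of `f v₁, f v₃`; likewise for
`σ v₂ v₄`.
-/

theorem LinearMap.ext_on₂ {R M N P : Type*} [CommRing R] [AddCommGroup M] [Module R M]
    [AddCommGroup N] [Module R N] [AddCommGroup P] [Module R P]
    {B B' : M →ₗ[R] N →ₗ[R] P} {s : Set M} {t : Set N}
    (hs : Submodule.span R s = ⊤) (ht : Submodule.span R t = ⊤)
    (h : ∀ x ∈ s, ∀ y ∈ t, B x y = B' x y) : B = B' :=
  LinearMap.ext_on hs fun x hx => LinearMap.ext_on ht fun y hy => h x hx y hy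

theorem LinearMap.IsAlt.apply_eq_of_forall_lt {R M N : Type*} [CommRing R] [AddCommGroup M]
    [Module R M] [AddCommGroup N] [Module R N] {B B' : M →ₗ[R] M →ₗ[R] N}
    (hB : B.IsAlt) (hB' : B'.IsAlt) {ι : Type*} [LinearOrder ι] {v : ι → M}
    (h : ∀ i j, i < j → B (v i) (v j) = B' (v i) (v j)) (i j : ι) :
    B (v i) (v j) = B' (v i) (v j) := by
  rcases lt_trichotomy i j with hij | rfl | hij
  · exact h i j hij
  · rw [hB.self_eq_zero, hB'.self_eq_zero]
  · rw [← hB.neg, ← hB'.neg, h j i hij]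

namespace LieAlgebra

variable {K L : Type*} [CommRing K] [LieRing L] [LieAlgebra K L]

variable (K) in
/-- The Chevalley–Eilenberg differential `δ¹ f`, with coefficients in the adjoint module. -/
def coboundary (f : L →ₗ[K] L) : L →ₗ[K] L →ₗ[K] L :=
  LinearMap.mk₂ K (fun x y => ⁅f x, y⁆ + ⁅x, f y⁆ - f ⁅x, y⁆)
    (fun x x' y => by simp only [map_add, add_lie]; abel)
    (fun c x y => by simp only [map_smul, smul_lie, smul_add, smul_sub])
    (fun x y y' => by simp only [map_add, lie_add]; abel)
    (fun c x y => by simp only [map_smul, lie_smul, smul_add, smul_sub])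

@[simp]
theorem coboundary_apply (f : L →ₗ[K] L) (x y : L) :
    coboundary K f x y = ⁅f x, y⁆ + ⁅x, f y⁆ - f ⁅x, y⁆ :=
  rfl

theorem coboundary_isAlt (f : L →ₗ[K] L) : (coboundary K f).IsAlt := fun x => by
  rw [coboundary_apply, lie_self, map_zero, sub_zero, ← lie_skew x (f x), add_neg_cancel]

variable (K L) in
def eta₂ : (L →ₗ[K] L →ₗ[K] L) →ₗ[K] (L → L → L → L) where
  toFun σ x y w := ⁅σ x y, w⁆ + σ ⁅x, y⁆ w
  map_add' σ τ := by ext; simp only [LinearMap.add_apply, add_lie, Pi.add_apply]; abel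
  map_smul' c σ := by ext; simp [smul_lie]

theorem eta₂_apply (σ : L →ₗ[K] L →ₗ[K] L) (x y w : L) :
    eta₂ K L σ x y w = ⁅σ x y, w⁆ + σ ⁅x, y⁆ w :=
  rfl

theorem apply_lie_of_eta₂_eq_zero {σ : L →ₗ[K] L →ₗ[K] L} (hη : eta₂ K L σ = 0) (x y w : L) :
    σ ⁅x, y⁆ w = -⁅σ x y, w⁆ :=
  eq_neg_of_add_eq_zero_right congr($hη x y w)

theorem eta₂_coboundary (h : ∀ a b c : L, ⁅⁅a, b⁆, c⁆ = 0) (f : L →ₗ[K] L) :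
    eta₂ K L (coboundary K f) = 0 := by
  ext x y w
  simp only [eta₂_apply, coboundary_apply, sub_lie, add_lie, h, map_zero, sub_zero,
    Pi.zero_apply]
  abel

theorem lie_lie_eq_zero_of_span {S : Set L}
    (hS : Submodule.span K (S ∪ Set.image2 (fun x y => ⁅x, y⁆) S S) = ⊤)
    (h : ∀ x ∈ S, ∀ y ∈ S, ∀ w : L, ⁅⁅x, y⁆, w⁆ = 0) (a b c : L) : ⁅⁅a, b⁆, c⁆ = 0 := by
  have hcomm : ∀ x ∈ S, ∀ y ∈ S, ∀ w : L, ⁅w, ⁅x, y⁆⁆ = 0 := fun x hx y hy w => by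
    rw [← lie_skew, h x hx y hy, neg_zero]
  suffices (LieModule.toEnd K L L : L →ₗ[K] L →ₗ[K] L).compr₂ (LieModule.toEnd K L L c) = 0 by
    have hc : ⁅c, ⁅a, b⁆⁆ = 0 := congr($this a b)
    rw [← lie_skew, hc, neg_zero]
  refine LinearMap.ext_on₂ hS hS ?_
  rintro x (hx | ⟨x₁, hx₁, x₂, hx₂, rfl⟩) y (hy | ⟨y₁, hy₁, y₂, hy₂, rfl⟩) <;>
    simp only [LinearMap.compr₂_apply, LieHom.coe_toLinearMap, LieModule.toEnd_apply_apply,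
      LinearMap.zero_apply]
  · exact hcomm x hx y hy c
  · rw [hcomm y₁ hy₁ y₂ hy₂, lie_zero]
  · rw [h x₁ hx₁ x₂ hx₂, lie_zero]
  · rw [h x₁ hx₁ x₂ hx₂, lie_zero]

theorem eq_zero_of_eta₂_eq_zero {ρ : L →ₗ[K] L →ₗ[K] L} (hρ : ρ.IsAlt) (hη : eta₂ K L ρ = 0)
    {S : Set L} (hS : Submodule.span K (S ∪ Set.image2 (fun x y => ⁅x, y⁆) S S) = ⊤)
    (h : ∀ x ∈ S, ∀ y ∈ S, ρ x y = 0) : ρ = 0 := by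
  have hlie : ∀ x ∈ S, ∀ y ∈ S, ∀ w, ρ ⁅x, y⁆ w = 0 := fun x hx y hy w => by
    rw [apply_lie_of_eta₂_eq_zero hη, h x hx y hy, zero_lie, neg_zero]
  refine LinearMap.ext_on₂ hS hS ?_
  rintro x (hx | ⟨x₁, hx₁, x₂, hx₂, rfl⟩) y (hy | ⟨y₁, hy₁, y₂, hy₂, rfl⟩)
  · exact h x hx y hy
  · rw [← hρ.neg, hlie y₁ hy₁ y₂ hy₂, neg_zero, LinearMap.zero_apply, LinearMap.zero_apply]
  · exact hlie x₁ hx₁ x₂ hx₂ _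
  · exact hlie x₁ hx₁ x₂ hx₂ _

variable (K) in
structure IsFourCycleBasis (v₁ v₂ v₃ v₄ z₁₂ z₂₃ z₃₄ z₄₁ : L) : Prop where
  linearIndependent : LinearIndependent K ![v₁, v₂, v₃, v₄, z₁₂, z₂₃, z₃₄, z₄₁]
  span_eq_top : Submodule.span K (Set.range ![v₁, v₂, v₃, v₄, z₁₂, z₂₃, z₃₄, z₄₁]) = ⊤
  lie₁₂ : ⁅v₁, v₂⁆ = z₁₂
  lie₂₃ : ⁅v₂, v₃⁆ = z₂₃
  lie₃₄ : ⁅v₃, v₄⁆ = z₃₄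
  lie₄₁ : ⁅v₄, v₁⁆ = z₄₁
  lie₁₃ : ⁅v₁, v₃⁆ = 0
  lie₂₄ : ⁅v₂, v₄⁆ = 0
  central : ∀ x : L, ⁅z₁₂, x⁆ = 0 ∧ ⁅z₂₃, x⁆ = 0 ∧ ⁅z₃₄, x⁆ = 0 ∧ ⁅z₄₁, x⁆ = 0

namespace IsFourCycleBasis

variable {v₁ v₂ v₃ v₄ z₁₂ z₂₃ z₃₄ z₄₁ : L}

theorem lie₂₁ (hB : IsFourCycleBasis K v₁ v₂ v₃ v₄ z₁₂ z₂₃ z₃₄ z₄₁) :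
    ⁅v₂, v₁⁆ = -z₁₂ := by
  rw [← lie_skew, hB.lie₁₂]

theorem lie₃₂ (hB : IsFourCycleBasis K v₁ v₂ v₃ v₄ z₁₂ z₂₃ z₃₄ z₄₁) :
    ⁅v₃, v₂⁆ = -z₂₃ := by
  rw [← lie_skew, hB.lie₂₃]

theorem lie₄₃ (hB : IsFourCycleBasis K v₁ v₂ v₃ v₄ z₁₂ z₂₃ z₃₄ z₄₁) :
    ⁅v₄, v₃⁆ = -z₃₄ := by
  rw [← lie_skew, hB.lie₃₄]

theorem lie₁₄ (hB : IsFourCycleBasis K v₁ v₂ v₃ v₄ z₁₂ z₂₃ z₃₄ z₄₁) :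
    ⁅v₁, v₄⁆ = -z₄₁ := by
  rw [← lie_skew, hB.lie₄₁]

theorem lie₃₁ (hB : IsFourCycleBasis K v₁ v₂ v₃ v₄ z₁₂ z₂₃ z₃₄ z₄₁) :
    ⁅v₃, v₁⁆ = 0 := by
  rw [← lie_skew, hB.lie₁₃, neg_zero]

theorem lie₄₂ (hB : IsFourCycleBasis K v₁ v₂ v₃ v₄ z₁₂ z₂₃ z₃₄ z₄₁) :
    ⁅v₄, v₂⁆ = 0 := by
  rw [← lie_skew, hB.lie₂₄, neg_zero]

theorem z₁₂_lie (hB : IsFourCycleBasis K v₁ v₂ v₃ v₄ z₁₂ z₂₃ z₃₄ z₄₁) (x : L) :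
    ⁅z₁₂, x⁆ = 0 :=
  (hB.central x).1

theorem z₂₃_lie (hB : IsFourCycleBasis K v₁ v₂ v₃ v₄ z₁₂ z₂₃ z₃₄ z₄₁) (x : L) :
    ⁅z₂₃, x⁆ = 0 :=
  (hB.central x).2.1

theorem z₃₄_lie (hB : IsFourCycleBasis K v₁ v₂ v₃ v₄ z₁₂ z₂₃ z₃₄ z₄₁) (x : L) :
    ⁅z₃₄, x⁆ = 0 :=
  (hB.central x).2.2.1

theorem z₄₁_lie (hB : IsFourCycleBasis K v₁ v₂ v₃ v₄ z₁₂ z₂₃ z₃₄ z₄₁) (x : L) :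
    ⁅z₄₁, x⁆ = 0 :=
  (hB.central x).2.2.2

theorem span_generators (hB : IsFourCycleBasis K v₁ v₂ v₃ v₄ z₁₂ z₂₃ z₃₄ z₄₁) :
    Submodule.span K (Set.range ![v₁, v₂, v₃, v₄] ∪
      Set.image2 (fun x y => ⁅x, y⁆) (Set.range ![v₁, v₂, v₃, v₄])
        (Set.range ![v₁, v₂, v₃, v₄])) = ⊤ := by
  refine eq_top_iff.2 (hB.span_eq_top ▸ Submodule.span_mono ?_)
  rw [Set.range_subset_iff]
  intro i
  fin_cases i <;> simp [hB.lie₁₂, hB.lie₂₃, hB.lie₃₄, hB.lie₄₁]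

theorem lie_lie_eq_zero (hB : IsFourCycleBasis K v₁ v₂ v₃ v₄ z₁₂ z₂₃ z₃₄ z₄₁) (a b c : L) :
    ⁅⁅a, b⁆, c⁆ = 0 := by
  refine lie_lie_eq_zero_of_span hB.span_generators ?_ a b c
  simp only [Set.forall_mem_range]
  intro i j w
  fin_cases i <;> fin_cases j <;>
    simp [hB.lie₁₂, hB.lie₂₃, hB.lie₃₄, hB.lie₄₁, hB.lie₁₃, hB.lie₂₄, hB.lie₂₁, hB.lie₃₂,
      hB.lie₄₃, hB.lie₁₄, hB.lie₃₁, hB.lie₄₂, hB.z₁₂_lie, hB.z₂₃_lie, hB.z₃₄_lie, hB.z₄₁_lie]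

theorem exists_eq_of_forall_lie_eq_zero
    (hB : IsFourCycleBasis K v₁ v₂ v₃ v₄ z₁₂ z₂₃ z₃₄ z₄₁) {p : L} (hp : ∀ w : L, ⁅p, w⁆ = 0) :
    ∃ a b c d : K, p = a • z₁₂ + b • z₂₃ + c • z₃₄ + d • z₄₁ := by
  obtain ⟨c, rfl⟩ := Submodule.mem_span_range_iff_exists_fun K |>.1
    (hB.span_eq_top ▸ Submodule.mem_top (x := p))
  have h₁ : -(c 1 • z₁₂) + c 3 • z₄₁ = 0 := by
    simpa [Fin.sum_univ_eight, hB.lie₂₁, hB.lie₃₁, hB.lie₄₁, hB.z₁₂_lie, hB.z₂₃_lie, hB.z₃₄_lie,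
      hB.z₄₁_lie] using hp v₁
  have h₂ : c 0 • z₁₂ + -(c 2 • z₂₃) = 0 := by
    simpa [Fin.sum_univ_eight, hB.lie₁₂, hB.lie₃₂, hB.lie₄₂, hB.z₁₂_lie, hB.z₂₃_lie, hB.z₃₄_lie,
      hB.z₄₁_lie] using hp v₂
  have hind := Fintype.linearIndependent_iff.1 hB.linearIndependent
  have hc₁ := hind ![0, 0, 0, 0, -c 1, 0, 0, c 3] (by simpa [Fin.sum_univ_eight] using h₁)
  have hc₂ := hind ![0, 0, 0, 0, c 0, -c 2, 0, 0] (by simpa [Fin.sum_univ_eight] using h₂)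
  have c₀ : c 0 = 0 := by simpa using hc₂ 4
  have c₁ : c 1 = 0 := by simpa using hc₁ 4
  have c₂ : c 2 = 0 := by simpa using hc₂ 5
  have c₃ : c 3 = 0 := by simpa using hc₁ 7
  exact ⟨c 4, c 5, c 6, c 7, by simp [Fin.sum_univ_eight, c₀, c₁, c₂, c₃]⟩

theorem exists_coboundary_eq (hB : IsFourCycleBasis K v₁ v₂ v₃ v₄ z₁₂ z₂₃ z₃₄ z₄₁)
    {σ : L →ₗ[K] L →ₗ[K] L} (hσ : σ.IsAlt) (hη : eta₂ K L σ = 0) :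
    ∃ f : L →ₗ[K] L, ∀ x ∈ Set.range ![v₁, v₂, v₃, v₄], ∀ y ∈ Set.range ![v₁, v₂, v₃, v₄],
      σ x y = coboundary K f x y := by
  have hcentral : ∀ x y : L, ⁅x, y⁆ = 0 → ∀ w : L, ⁅σ x y, w⁆ = 0 := fun x y hxy w => by
    rw [← neg_eq_zero, ← apply_lie_of_eta₂_eq_zero hη, hxy, map_zero, LinearMap.zero_apply]
  obtain ⟨a, b, c, d, h₁₃⟩ := hB.exists_eq_of_forall_lie_eq_zero (hcentral _ _ hB.lie₁₃)
  obtain ⟨a', b', c', d', h₂₄⟩ := hB.exists_eq_of_forall_lie_eq_zero (hcentral _ _ hB.lie₂₄)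
  set vals := ![b • v₂ - c • v₄, c' • v₃ - d' • v₁, a • v₂ - d • v₄, b' • v₃ - a' • v₁,
    -σ v₁ v₂, -σ v₂ v₃, -σ v₃ v₄, -σ v₄ v₁]
  set f := (Module.Basis.mk hB.linearIndependent hB.span_eq_top.ge).constr K vals
  have hf : ∀ i, f (![v₁, v₂, v₃, v₄, z₁₂, z₂₃, z₃₄, z₄₁] i) = vals i := fun i => by
    rw [← Module.Basis.mk_apply hB.linearIndependent hB.span_eq_top.ge]
    exact Module.Basis.constr_basis _ K vals i
  have f₁ : f v₁ = b • v₂ - c • v₄ := hf 0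
  have f₂ : f v₂ = c' • v₃ - d' • v₁ := hf 1
  have f₃ : f v₃ = a • v₂ - d • v₄ := hf 2
  have f₄ : f v₄ = b' • v₃ - a' • v₁ := hf 3
  have f₁₂ : f z₁₂ = -σ v₁ v₂ := hf 4
  have f₂₃ : f z₂₃ = -σ v₂ v₃ := hf 5
  have f₃₄ : f z₃₄ = -σ v₃ v₄ := hf 6
  have f₄₁ : f z₄₁ = -σ v₄ v₁ := hf 7
  refine ⟨f, Set.forall_mem_range.2 fun i => Set.forall_mem_range.2 fun j => ?_⟩
  refine hσ.apply_eq_of_forall_lt (coboundary_isAlt f) (fun i j hij => ?_) i j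
  fin_cases i <;> fin_cases j <;> revert hij <;>
    simp [f₁, f₂, f₃, f₄, f₁₂, f₂₃, f₃₄, f₄₁, h₁₃, h₂₄, hσ.neg, hB.lie₁₂, hB.lie₂₃, hB.lie₃₄,
      hB.lie₄₁, hB.lie₁₃, hB.lie₂₄, hB.lie₂₁, hB.lie₃₂, hB.lie₄₃, hB.lie₁₄, hB.lie₃₁, hB.lie₄₂] <;>
    abel

end IsFourCycleBasis

end LieAlgebra

theorem four_cycle_ker_eta_is_coboundary_general
    {K L : Type*} [Field K] [LieRing L] [LieAlgebra K L]
    (v₁ v₂ v₃ v₄ z₁₂ z₂₃ z₃₄ z₄₁ : L)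
    (hind : LinearIndependent K ![v₁, v₂, v₃, v₄, z₁₂, z₂₃, z₃₄, z₄₁])
    (hspan : Submodule.span K
      (Set.range ![v₁, v₂, v₃, v₄, z₁₂, z₂₃, z₃₄, z₄₁]) = ⊤)
    (h12 : ⁅v₁, v₂⁆ = z₁₂) (h23 : ⁅v₂, v₃⁆ = z₂₃)
    (h34 : ⁅v₃, v₄⁆ = z₃₄) (h41 : ⁅v₄, v₁⁆ = z₄₁)
    (h13 : ⁅v₁, v₃⁆ = 0) (h24 : ⁅v₂, v₄⁆ = 0)
    (hcent : ∀ x : L, ⁅z₁₂, x⁆ = 0 ∧ ⁅z₂₃, x⁆ = 0 ∧ ⁅z₃₄, x⁆ = 0 ∧ ⁅z₄₁, x⁆ = 0)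
    (σ : L →ₗ[K] L →ₗ[K] L) (halt : ∀ x, σ x x = 0)
    (hker : ∀ x y w : L, ⁅σ x y, w⁆ + σ ⁅x, y⁆ w = 0) :
    ∃ f : L →ₗ[K] L, ∀ x y : L, σ x y = ⁅f x, y⁆ + ⁅x, f y⁆ - f ⁅x, y⁆ := by
  have hB : LieAlgebra.IsFourCycleBasis K v₁ v₂ v₃ v₄ z₁₂ z₂₃ z₃₄ z₄₁ :=
    ⟨hind, hspan, h12, h23, h34, h41, h13, h24, hcent⟩
  have hη : LieAlgebra.eta₂ K L σ = 0 := funext fun x => funext fun y => funext (hker x y)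
  obtain ⟨f, hf⟩ := hB.exists_coboundary_eq halt hη
  have hρ : σ - LieAlgebra.coboundary K f = 0 := by
    refine LieAlgebra.eq_zero_of_eta₂_eq_zero (fun x => ?_) ?_ hB.span_generators
      fun x hx y hy => by simp [hf x hx y hy]
    · simp [halt x, LieAlgebra.coboundary_isAlt f x]
    · rw [map_sub, hη, LieAlgebra.eta₂_coboundary hB.lie_lie_eq_zero, sub_zero]
  exact ⟨f, fun x y => congr($(sub_eq_zero.1 hρ) x y)⟩

/-- For the 2-step nilpotent Lie algebra of the 4-cycle graph, every `σ ∈ ker η₂` is a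
Chevalley–Eilenberg coboundary; hence `H²_{2-nil}(μ,μ) = 0`. -/
theorem four_cycle_ker_eta_is_coboundary
    {K L : Type*} [Field K] [CharZero K] [LieRing L] [LieAlgebra K L]
    (v₁ v₂ v₃ v₄ z₁₂ z₂₃ z₃₄ z₄₁ : L)
    (hind : LinearIndependent K ![v₁, v₂, v₃, v₄, z₁₂, z₂₃, z₃₄, z₄₁])
    (hspan : Submodule.span K
      (Set.range ![v₁, v₂, v₃, v₄, z₁₂, z₂₃, z₃₄, z₄₁]) = ⊤)
    (h12 : ⁅v₁, v₂⁆ = z₁₂) (h23 : ⁅v₂, v₃⁆ = z₂₃)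
    (h34 : ⁅v₃, v₄⁆ = z₃₄) (h41 : ⁅v₄, v₁⁆ = z₄₁)
    (h13 : ⁅v₁, v₃⁆ = 0) (h24 : ⁅v₂, v₄⁆ = 0)
    (hcent : ∀ x : L, ⁅z₁₂, x⁆ = 0 ∧ ⁅z₂₃, x⁆ = 0 ∧ ⁅z₃₄, x⁆ = 0 ∧ ⁅z₄₁, x⁆ = 0)
    (σ : L →ₗ[K] L →ₗ[K] L) (halt : ∀ x, σ x x = 0)
    (hker : ∀ x y w : L, ⁅σ x y, w⁆ + σ ⁅x, y⁆ w = 0) :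
    ∃ f : L →ₗ[K] L, ∀ x y : L, σ x y = ⁅f x, y⁆ + ⁅x, f y⁆ - f ⁅x, y⁆ :=
  four_cycle_ker_eta_is_coboundary_general v₁ v₂ v₃ v₄ z₁₂ z₂₃ z₃₄ z₄₁ hind hspan h12 h23 h34 h41
    h13 h24 hcent σ halt hker
end

section
/- Let G = (V, E) be a simple graph with no isolated vertices that is not complete and with |V| ≥ 5, and let n = g(2, G) be the associated 2-step nilpotent graph Lie algebra with center z = span{v_i ∧ v_j : {v_i, v_j} ∈ E}. Then there exist linearly independent elements v, w in span(V) with [v, w] = 0 and an element z ∈ z with z ∉ span([v, n] ∪ [w, n]). -/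
/-!
Take non-adjacent `a ≠ b` and an edge `{i, j}` disjoint from `{a, b}`, and put `v = ν a`,
`w = ν b`, `z = ⁅ν i, ν j⁆`. Since the edge brackets are central, `⁅ν c, n⁆` is spanned by the
brackets of the edges at `c`; so `span (⁅v, n⁆ ∪ ⁅w, n⁆)` lies in the span of the brackets of
edges meeting `{a, b}`, which does not contain `z` because the edge brackets are independent.
-/

namespace SimpleGraph

variable {V : Type*} (G : SimpleGraph V)

theorem exists_nonadj_and_adj_disjoint [Fintype V] (h5 : 5 ≤ Fintype.card V)
    (hnc : ¬ ∀ i j : V, i ≠ j → G.Adj i j) (hiso : ∀ i : V, ∃ j, G.Adj i j) :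
    ∃ a b i j : V, a ≠ b ∧ ¬ G.Adj a b ∧ G.Adj i j ∧
      i ≠ a ∧ i ≠ b ∧ j ≠ a ∧ j ≠ b := by
  classical
  push Not at hnc
  obtain ⟨a, b, hab, hnab⟩ := hnc
  by_cases hedge : ∃ i j : V, G.Adj i j ∧ i ≠ a ∧ i ≠ b ∧ j ≠ a ∧ j ≠ b
  · obtain ⟨i, j, h⟩ := hedge
    exact ⟨a, b, i, j, hab, hnab, h⟩
  -- Otherwise every edge meets `{a, b}`: take `c, d, e` outside it; `c, d` are not adjacent
  -- and `e` has a neighbour, which lies in `{a, b}`.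
  push Not at hedge
  have hcard : 2 < ({a, b}ᶜ : Finset V).card := by
    rw [Finset.card_compl, Finset.card_pair hab]
    omega
  obtain ⟨c, hc, d, hd, e, he, hcd, hce, hde⟩ := Finset.two_lt_card.1 hcard
  simp only [Finset.mem_compl, Finset.mem_insert, Finset.mem_singleton, not_or] at hc hd he
  obtain ⟨y, hey⟩ := hiso e
  have hy : y = a ∨ y = b := by
    by_contra! hy
    exact hy.2 (hedge e y hey he.1 he.2 hy.1)
  refine ⟨c, d, e, y, hcd, fun hcd' => hd.2 (hedge c d hcd' hc.1 hc.2 hd.1), hey,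
    hce.symm, hde.symm, ?_, ?_⟩ <;> grind

theorem exists_nonadj_and_lt_adj_disjoint [Fintype V] [LinearOrder V]
    (h5 : 5 ≤ Fintype.card V) (hnc : ¬ ∀ i j : V, i ≠ j → G.Adj i j)
    (hiso : ∀ i : V, ∃ j, G.Adj i j) :
    ∃ a b i j : V, a ≠ b ∧ ¬ G.Adj a b ∧ i < j ∧ G.Adj i j ∧
      i ≠ a ∧ i ≠ b ∧ j ≠ a ∧ j ≠ b := by
  obtain ⟨a, b, i, j, hab, hnab, hij, hia, hib, hja, hjb⟩ :=
    G.exists_nonadj_and_adj_disjoint h5 hnc hiso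
  rcases hij.ne.lt_or_gt with hlt | hgt
  · exact ⟨a, b, i, j, hab, hnab, hlt, hij, hia, hib, hja, hjb⟩
  · exact ⟨a, b, j, i, hab, hnab, hgt, hij.symm, hja, hjb, hia, hib⟩

abbrev OrderedEdge [LinearOrder V] : Type _ := {p : V × V // p.1 < p.2 ∧ G.Adj p.1 p.2}

def incidentEdges [LinearOrder V] (c : V) : Set G.OrderedEdge := {p | p.1.1 = c ∨ p.1.2 = c}

end SimpleGraph

section GraphLieAlgebra

open SimpleGraph Submodule

variable {K L V : Type*} [Field K] [LieRing L] [LieAlgebra K L] [LinearOrder V]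

def edgeBracket (G : SimpleGraph V) (ν : V → L) (p : G.OrderedEdge) : L := ⁅ν p.1.1, ν p.1.2⁆

variable {G : SimpleGraph V} {ν : V → L}

theorem lie_generator_mem_span_incident (hnadj : ∀ i j : V, ¬ G.Adj i j → ⁅ν i, ν j⁆ = 0)
    (hcent : ∀ i j : V, G.Adj i j → ∀ x : L, ⁅⁅ν i, ν j⁆, x⁆ = 0) (c : V)
    (t : V ⊕ G.OrderedEdge) :
    ⁅ν c, Sum.elim ν (edgeBracket G ν) t⁆ ∈ span K (edgeBracket G ν '' G.incidentEdges c) := by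
  rcases t with k | p
  · by_cases hck : G.Adj c k
    · rcases hck.ne.lt_or_gt with hlt | hgt
      · exact subset_span ⟨⟨(c, k), hlt, hck⟩, Or.inl rfl, rfl⟩
      · rw [Sum.elim_inl, ← lie_skew]
        exact neg_mem (subset_span ⟨⟨(k, c), hgt, hck.symm⟩, Or.inr rfl, rfl⟩)
    · rw [Sum.elim_inl, hnadj c k hck]
      exact zero_mem _
  · rw [Sum.elim_inr, edgeBracket, ← lie_skew, hcent _ _ p.2.2, neg_zero]
    exact zero_mem _

theorem lie_mem_span_incident (hnadj : ∀ i j : V, ¬ G.Adj i j → ⁅ν i, ν j⁆ = 0)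
    (hcent : ∀ i j : V, G.Adj i j → ∀ x : L, ⁅⁅ν i, ν j⁆, x⁆ = 0)
    (hspan : span K (Set.range (Sum.elim ν (edgeBracket G ν))) = ⊤) (c : V) (x : L) :
    ⁅ν c, x⁆ ∈ span K (edgeBracket G ν '' G.incidentEdges c) := by
  have hle : span K (Set.range (Sum.elim ν (edgeBracket G ν))) ≤
      (span K (edgeBracket G ν '' G.incidentEdges c)).comap (LieAlgebra.ad K L (ν c)) :=
    span_le.2 (Set.range_subset_iff.2 (lie_generator_mem_span_incident hnadj hcent c))
  rw [hspan] at hle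
  exact hle mem_top

end GraphLieAlgebra

open SimpleGraph Submodule in
theorem graph_lie_algebra_nonrigidity_hypotheses_general
    {K L V : Type*} [Field K] [LieRing L] [LieAlgebra K L]
    [Fintype V] [LinearOrder V] (G : SimpleGraph V)
    (h5 : 5 ≤ Fintype.card V)
    (hnc : ¬ ∀ i j : V, i ≠ j → G.Adj i j)
    (hiso : ∀ i : V, ∃ j, G.Adj i j) (ν : V → L)
    (hind : LinearIndependent K
      (Sum.elim ν (fun p : {p : V × V // p.1 < p.2 ∧ G.Adj p.1 p.2} =>
        ⁅ν p.1.1, ν p.1.2⁆)))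
    (hspan : Submodule.span K (Set.range
      (Sum.elim ν (fun p : {p : V × V // p.1 < p.2 ∧ G.Adj p.1 p.2} =>
        ⁅ν p.1.1, ν p.1.2⁆))) = ⊤)
    (hnadj : ∀ i j : V, ¬ G.Adj i j → ⁅ν i, ν j⁆ = 0)
    (hcent : ∀ i j : V, G.Adj i j → ∀ x : L, ⁅⁅ν i, ν j⁆, x⁆ = 0) :
    ∃ v w : L, v ∈ Submodule.span K (Set.range ν) ∧
      w ∈ Submodule.span K (Set.range ν) ∧
      LinearIndependent K ![v, w] ∧ ⁅v, w⁆ = 0 ∧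
      ∃ z ∈ Submodule.span K {x | ∃ i j : V, G.Adj i j ∧ x = ⁅ν i, ν j⁆},
        z ∉ Submodule.span K
          ({u | ∃ x : L, u = ⁅v, x⁆} ∪ {u | ∃ x : L, u = ⁅w, x⁆}) := by
  obtain ⟨a, b, i, j, hab, hnab, hij, hadj, hia, hib, hja, hjb⟩ :=
    G.exists_nonadj_and_lt_adj_disjoint h5 hnc hiso
  have hν : LinearIndependent K ν := hind.comp Sum.inl Sum.inl_injective
  have hbr : LinearIndependent K (edgeBracket G ν) := hind.comp Sum.inr Sum.inr_injective
  refine ⟨ν a, ν b, subset_span ⟨a, rfl⟩, subset_span ⟨b, rfl⟩, ?_, hnadj a b hnab,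
    ⁅ν i, ν j⁆, subset_span ⟨i, j, hadj, rfl⟩, ?_⟩
  · have hνab := hν.comp ![a, b] (injective_pair_iff_ne.2 hab)
    rwa [← FinVec.map_eq] at hνab
  · have hle : span K ({u | ∃ x : L, u = ⁅ν a, x⁆} ∪ {u | ∃ x : L, u = ⁅ν b, x⁆}) ≤
        span K (edgeBracket G ν '' (G.incidentEdges a ∪ G.incidentEdges b)) := by
      rw [span_le, Set.image_union, span_union]
      rintro u (⟨x, rfl⟩ | ⟨x, rfl⟩)
      · exact mem_sup_left (lie_mem_span_incident hnadj hcent hspan a x)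
      · exact mem_sup_right (lie_mem_span_incident hnadj hcent hspan b x)
    refine fun hmem => hbr.notMem_span_image (x := ⟨(i, j), hij, hadj⟩) ?_ (hle hmem)
    simp [incidentEdges, hia, hib, hja, hjb]

/-- For a non-complete simple graph `G` with at least 5 vertices and no isolated vertices,
the graph Lie algebra `n = g(2,G)` has two independent commuting elements `v, w` of
`span(V)` and a central element `z ∉ span(⁅v,n⁆ ∪ ⁅w,n⁆)`. -/
theorem graph_lie_algebra_nonrigidity_hypotheses
    {K L V : Type*} [Field K] [CharZero K] [LieRing L] [LieAlgebra K L]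
    [Fintype V] [LinearOrder V] (G : SimpleGraph V)
    (h5 : 5 ≤ Fintype.card V)
    (hnc : ¬ ∀ i j : V, i ≠ j → G.Adj i j)
    (hiso : ∀ i : V, ∃ j, G.Adj i j) (ν : V → L)
    (hind : LinearIndependent K
      (Sum.elim ν (fun p : {p : V × V // p.1 < p.2 ∧ G.Adj p.1 p.2} =>
        ⁅ν p.1.1, ν p.1.2⁆)))
    (hspan : Submodule.span K (Set.range
      (Sum.elim ν (fun p : {p : V × V // p.1 < p.2 ∧ G.Adj p.1 p.2} =>
        ⁅ν p.1.1, ν p.1.2⁆))) = ⊤)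
    (hnadj : ∀ i j : V, ¬ G.Adj i j → ⁅ν i, ν j⁆ = 0)
    (hcent : ∀ i j : V, G.Adj i j → ∀ x : L, ⁅⁅ν i, ν j⁆, x⁆ = 0) :
    ∃ v w : L, v ∈ Submodule.span K (Set.range ν) ∧
      w ∈ Submodule.span K (Set.range ν) ∧
      LinearIndependent K ![v, w] ∧ ⁅v, w⁆ = 0 ∧
      ∃ z ∈ Submodule.span K {x | ∃ i j : V, G.Adj i j ∧ x = ⁅ν i, ν j⁆},
        z ∉ Submodule.span K
          ({u | ∃ x : L, u = ⁅v, x⁆} ∪ {u | ∃ x : L, u = ⁅w, x⁆}) :=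
  graph_lie_algebra_nonrigidity_hypotheses_general G h5 hnc hiso ν hind hspan hnadj hcent
end

section
/- Let g be the 2-step nilpotent Lie algebra of the 4-cycle graph (basis v_1,...,v_4, z_{12}, z_{23}, z_{34}, z_{41} with cycle brackets as above). Then for every pair of linearly independent elements v, w ∈ span{v_1, v_2, v_3, v_4} with [v, w] = 0, the span of [v, g] ∪ [w, g] equals the whole center span{z_{12}, z_{23}, z_{34}, z_{41}}. -/
/-!
Write `v = ∑ aᵢ vᵢ` and `w = ∑ bᵢ vᵢ`. Bracketing with a vertex gives a combination of the two
edges at that vertex, e.g. `⁅v, v₂⁆ = a₁ z₁₂ - a₃ z₂₃`, so `⁅v, v₂⁆` and `⁅w, v₂⁆` span both edges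
at `v₂` as soon as the minor `a₁ b₃ - a₃ b₁` of its two neighbours is nonzero; the same minor
serves the opposite vertex `v₄`, and these two vertices together see all four edges. The bracket
`⁅v, w⁆` is the combination of the `z`'s with the four cyclic minors as coefficients, so `⁅v, w⁆ = 0`
kills them; as `v, w` are independent some minor survives, and it must be one of the two
diagonal ones.
-/

theorem Submodule.mem_of_smul_sub_smul_mem {K M : Type*} [Field K] [AddCommGroup M] [Module K M]
    (S : Submodule K M) {p q : M} {a b c d : K} (h₁ : a • p - b • q ∈ S)
    (h₂ : c • p - d • q ∈ S) (hdet : a * d - b * c ≠ 0) : p ∈ S ∧ q ∈ S := by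
  have hp : (a * d - b * c) • p = d • (a • p - b • q) - b • (c • p - d • q) := by module
  have hq : (a * d - b * c) • q = c • (a • p - b • q) - a • (c • p - d • q) := by module
  refine ⟨(S.smul_mem_iff hdet).1 ?_, (S.smul_mem_iff hdet).1 ?_⟩
  · rw [hp]; exact S.sub_mem (S.smul_mem d h₁) (S.smul_mem b h₂)
  · rw [hq]; exact S.sub_mem (S.smul_mem c h₁) (S.smul_mem a h₂)

theorem exists_mul_ne_mul_of_linearIndependent {K M ι : Type*} [Field K] [AddCommGroup M]
    [Module K M] [Fintype ι] (e : ι → M) (a b : ι → K)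
    (hli : LinearIndependent K ![∑ i, a i • e i, ∑ i, b i • e i]) :
    ∃ i j, a i * b j ≠ a j * b i := by
  by_contra! hminor
  have ha : ∀ k, a k = 0 := fun k => by
    have hcomb : b k • ∑ i, a i • e i + (-a k) • ∑ i, b i • e i = 0 := by
      have hterm : ∀ i, b k • a i • e i + (-a k) • b i • e i = 0 := fun i => by
        rw [smul_smul, smul_smul, ← add_smul, mul_comm (b k), hminor i k]; simp
      simp only [Finset.smul_sum, ← Finset.sum_add_distrib, hterm, Finset.sum_const_zero]
    exact neg_eq_zero.1 (LinearIndependent.pair_iff.1 hli _ _ hcomb).2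
  exact hli.ne_zero 0 (by simp [ha])

theorem LieAlgebra.lie_mem_of_span_eq_top {K L : Type*} [CommRing K] [LieRing L] [LieAlgebra K L]
    {s : Set L} (hs : Submodule.span K s = ⊤) (N : Submodule K L)
    (hN : ∀ x ∈ s, ∀ y ∈ s, ⁅x, y⁆ ∈ N) (x y : L) : ⁅x, y⁆ ∈ N := by
  have hx : x ∈ Submodule.span K s := hs ▸ Submodule.mem_top
  have hy : y ∈ Submodule.span K s := hs ▸ Submodule.mem_top
  induction hx, hy using Submodule.span_induction₂ with
  | mem_mem x y hx hy => exact hN x hx y hy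
  | zero_left y _ => simp
  | zero_right x _ => simp
  | add_left x y z _ _ _ hxz hyz => rw [add_lie]; exact N.add_mem hxz hyz
  | add_right x y z _ _ _ hxy hxz => rw [lie_add]; exact N.add_mem hxy hxz
  | smul_left r x y _ _ hxy => rw [smul_lie]; exact N.smul_mem r hxy
  | smul_right r x y _ _ hxy => rw [lie_smul]; exact N.smul_mem r hxy

structure IsFourCycleBracket {L : Type*} [LieRing L] (v₁ v₂ v₃ v₄ z₁₂ z₂₃ z₃₄ z₄₁ : L) : Prop where
  lie₁₂ : ⁅v₁, v₂⁆ = z₁₂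
  lie₂₃ : ⁅v₂, v₃⁆ = z₂₃
  lie₃₄ : ⁅v₃, v₄⁆ = z₃₄
  lie₄₁ : ⁅v₄, v₁⁆ = z₄₁
  lie₁₃ : ⁅v₁, v₃⁆ = 0
  lie₂₄ : ⁅v₂, v₄⁆ = 0

namespace IsFourCycleBracket

variable {K L : Type*} [Field K] [LieRing L] [LieAlgebra K L] {v₁ v₂ v₃ v₄ z₁₂ z₂₃ z₃₄ z₄₁ : L}

theorem lie₂₁ (hC : IsFourCycleBracket v₁ v₂ v₃ v₄ z₁₂ z₂₃ z₃₄ z₄₁) : ⁅v₂, v₁⁆ = -z₁₂ := by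
  rw [← lie_skew, hC.lie₁₂]

theorem lie₃₂ (hC : IsFourCycleBracket v₁ v₂ v₃ v₄ z₁₂ z₂₃ z₃₄ z₄₁) : ⁅v₃, v₂⁆ = -z₂₃ := by
  rw [← lie_skew, hC.lie₂₃]

theorem lie₄₃ (hC : IsFourCycleBracket v₁ v₂ v₃ v₄ z₁₂ z₂₃ z₃₄ z₄₁) : ⁅v₄, v₃⁆ = -z₃₄ := by
  rw [← lie_skew, hC.lie₃₄]

theorem lie₁₄ (hC : IsFourCycleBracket v₁ v₂ v₃ v₄ z₁₂ z₂₃ z₃₄ z₄₁) : ⁅v₁, v₄⁆ = -z₄₁ := by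
  rw [← lie_skew, hC.lie₄₁]

theorem lie₃₁ (hC : IsFourCycleBracket v₁ v₂ v₃ v₄ z₁₂ z₂₃ z₃₄ z₄₁) : ⁅v₃, v₁⁆ = 0 := by
  rw [← lie_skew, hC.lie₁₃, neg_zero]

theorem lie₄₂ (hC : IsFourCycleBracket v₁ v₂ v₃ v₄ z₁₂ z₂₃ z₃₄ z₄₁) : ⁅v₄, v₂⁆ = 0 := by
  rw [← lie_skew, hC.lie₂₄, neg_zero]

-- `a i` is the coefficient of `vᵢ₊₁`.
theorem lie_sum_smul (hC : IsFourCycleBracket v₁ v₂ v₃ v₄ z₁₂ z₂₃ z₃₄ z₄₁) (a : Fin 4 → K) :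
    ⁅∑ i, a i • ![v₁, v₂, v₃, v₄] i, v₁⁆ = a 3 • z₄₁ - a 1 • z₁₂ ∧
    ⁅∑ i, a i • ![v₁, v₂, v₃, v₄] i, v₂⁆ = a 0 • z₁₂ - a 2 • z₂₃ ∧
    ⁅∑ i, a i • ![v₁, v₂, v₃, v₄] i, v₃⁆ = a 1 • z₂₃ - a 3 • z₃₄ ∧
    ⁅∑ i, a i • ![v₁, v₂, v₃, v₄] i, v₄⁆ = a 2 • z₃₄ - a 0 • z₄₁ := by
  simp only [Fin.sum_univ_four, Matrix.cons_val, add_lie, smul_lie, hC.lie₁₂, hC.lie₂₃, hC.lie₃₄,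
    hC.lie₄₁, hC.lie₁₃, hC.lie₂₄, hC.lie₂₁, hC.lie₃₂, hC.lie₄₃, hC.lie₁₄, hC.lie₃₁, hC.lie₄₂,
    lie_self]
  refine ⟨?_, ?_, ?_, ?_⟩ <;> module

theorem lie_sum_smul_sum_smul (hC : IsFourCycleBracket v₁ v₂ v₃ v₄ z₁₂ z₂₃ z₃₄ z₄₁)
    (a b : Fin 4 → K) :
    ⁅∑ i, a i • ![v₁, v₂, v₃, v₄] i, ∑ i, b i • ![v₁, v₂, v₃, v₄] i⁆ =
      (a 0 * b 1 - a 1 * b 0) • z₁₂ + (a 1 * b 2 - a 2 * b 1) • z₂₃ +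
        (a 2 * b 3 - a 3 * b 2) • z₃₄ + (a 3 * b 0 - a 0 * b 3) • z₄₁ := by
  obtain ⟨h₁, h₂, h₃, h₄⟩ := hC.lie_sum_smul a
  rw [Fin.sum_univ_four (fun i => b i • _)]
  simp only [lie_add, lie_smul, Matrix.cons_val, h₁, h₂, h₃, h₄]
  module

theorem lie_mem_span_center (hC : IsFourCycleBracket v₁ v₂ v₃ v₄ z₁₂ z₂₃ z₃₄ z₄₁)
    (hspan : Submodule.span K (Set.range ![v₁, v₂, v₃, v₄, z₁₂, z₂₃, z₃₄, z₄₁]) = ⊤)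
    (hcent : ∀ x : L, ⁅z₁₂, x⁆ = 0 ∧ ⁅z₂₃, x⁆ = 0 ∧ ⁅z₃₄, x⁆ = 0 ∧ ⁅z₄₁, x⁆ = 0) (x y : L) :
    ⁅x, y⁆ ∈ Submodule.span K {z₁₂, z₂₃, z₃₄, z₄₁} := by
  have hcent' : ∀ x : L, ⁅x, z₁₂⁆ = 0 ∧ ⁅x, z₂₃⁆ = 0 ∧ ⁅x, z₃₄⁆ = 0 ∧ ⁅x, z₄₁⁆ = 0 := fun x => by
    simp only [← lie_skew x, hcent, neg_zero, and_self]
  refine LieAlgebra.lie_mem_of_span_eq_top hspan _ ?_ x y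
  rintro _ ⟨i, rfl⟩ _ ⟨j, rfl⟩
  fin_cases i <;> fin_cases j <;>
    simp [hC.lie₁₂, hC.lie₂₃, hC.lie₃₄, hC.lie₄₁, hC.lie₁₃, hC.lie₂₄, hC.lie₂₁, hC.lie₃₂, hC.lie₄₃,
      hC.lie₁₄, hC.lie₃₁, hC.lie₄₂, hcent, hcent', Submodule.mem_span_of_mem]

theorem diagonal_minor_ne_zero_of_lie_eq_zero
    (hC : IsFourCycleBracket v₁ v₂ v₃ v₄ z₁₂ z₂₃ z₃₄ z₄₁)
    (hz : LinearIndependent K ![z₁₂, z₂₃, z₃₄, z₄₁]) (a b : Fin 4 → K)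
    (hli : LinearIndependent K ![∑ i, a i • ![v₁, v₂, v₃, v₄] i, ∑ i, b i • ![v₁, v₂, v₃, v₄] i])
    (hlie : ⁅∑ i, a i • ![v₁, v₂, v₃, v₄] i, ∑ i, b i • ![v₁, v₂, v₃, v₄] i⁆ = 0) :
    a 0 * b 2 ≠ a 2 * b 0 ∨ a 1 * b 3 ≠ a 3 * b 1 := by
  rw [hC.lie_sum_smul_sum_smul] at hlie
  have hcyclic := Fintype.linearIndependent_iff.1 hz ![_, _, _, _]
    (by simpa [Fin.sum_univ_four] using hlie)
  have h₁₂ := hcyclic 0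
  have h₂₃ := hcyclic 1
  have h₃₄ := hcyclic 2
  have h₄₁ := hcyclic 3
  simp only [Fin.isValue, Matrix.cons_val, sub_eq_zero] at h₁₂ h₂₃ h₃₄ h₄₁
  obtain ⟨i, j, hij⟩ := exists_mul_ne_mul_of_linearIndependent _ a b hli
  by_contra! h
  fin_cases i <;> fin_cases j <;> grind

theorem span_center_le (hC : IsFourCycleBracket v₁ v₂ v₃ v₄ z₁₂ z₂₃ z₃₄ z₄₁)
    (S : Submodule K L) (a b : Fin 4 → K)
    (ha : ∀ x, ⁅∑ i, a i • ![v₁, v₂, v₃, v₄] i, x⁆ ∈ S)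
    (hb : ∀ x, ⁅∑ i, b i • ![v₁, v₂, v₃, v₄] i, x⁆ ∈ S)
    (hminor : a 0 * b 2 ≠ a 2 * b 0 ∨ a 1 * b 3 ≠ a 3 * b 1) :
    Submodule.span K {z₁₂, z₂₃, z₃₄, z₄₁} ≤ S := by
  obtain ⟨ha₁, ha₂, ha₃, ha₄⟩ := hC.lie_sum_smul a
  obtain ⟨hb₁, hb₂, hb₃, hb₄⟩ := hC.lie_sum_smul b
  suffices z₁₂ ∈ S ∧ z₂₃ ∈ S ∧ z₃₄ ∈ S ∧ z₄₁ ∈ S by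
    simpa [Submodule.span_le, Set.insert_subset_iff]
  rcases hminor with h | h
  · obtain ⟨h₁₂, h₂₃⟩ := S.mem_of_smul_sub_smul_mem (ha₂ ▸ ha v₂) (hb₂ ▸ hb v₂) (sub_ne_zero.2 h)
    obtain ⟨h₃₄, h₄₁⟩ :=
      S.mem_of_smul_sub_smul_mem (ha₄ ▸ ha v₄) (hb₄ ▸ hb v₄) (sub_ne_zero.2 h.symm)
    exact ⟨h₁₂, h₂₃, h₃₄, h₄₁⟩
  · obtain ⟨h₄₁, h₁₂⟩ :=
      S.mem_of_smul_sub_smul_mem (ha₁ ▸ ha v₁) (hb₁ ▸ hb v₁) (sub_ne_zero.2 h.symm)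
    obtain ⟨h₂₃, h₃₄⟩ := S.mem_of_smul_sub_smul_mem (ha₃ ▸ ha v₃) (hb₃ ▸ hb v₃) (sub_ne_zero.2 h)
    exact ⟨h₁₂, h₂₃, h₃₄, h₄₁⟩

end IsFourCycleBracket

theorem four_cycle_brackets_span_center_general
    {K L : Type*} [Field K] [LieRing L] [LieAlgebra K L]
    (v₁ v₂ v₃ v₄ z₁₂ z₂₃ z₃₄ z₄₁ : L)
    (hind : LinearIndependent K ![v₁, v₂, v₃, v₄, z₁₂, z₂₃, z₃₄, z₄₁])
    (hspan : Submodule.span K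
      (Set.range ![v₁, v₂, v₃, v₄, z₁₂, z₂₃, z₃₄, z₄₁]) = ⊤)
    (h12 : ⁅v₁, v₂⁆ = z₁₂) (h23 : ⁅v₂, v₃⁆ = z₂₃)
    (h34 : ⁅v₃, v₄⁆ = z₃₄) (h41 : ⁅v₄, v₁⁆ = z₄₁)
    (h13 : ⁅v₁, v₃⁆ = 0) (h24 : ⁅v₂, v₄⁆ = 0)
    (hcent : ∀ x : L, ⁅z₁₂, x⁆ = 0 ∧ ⁅z₂₃, x⁆ = 0 ∧ ⁅z₃₄, x⁆ = 0 ∧ ⁅z₄₁, x⁆ = 0) :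
    ∀ v w : L, v ∈ Submodule.span K ({v₁, v₂, v₃, v₄} : Set L) →
      w ∈ Submodule.span K ({v₁, v₂, v₃, v₄} : Set L) →
      LinearIndependent K ![v, w] → ⁅v, w⁆ = 0 →
      Submodule.span K ({u | ∃ x : L, u = ⁅v, x⁆} ∪ {u | ∃ x : L, u = ⁅w, x⁆}) =
        Submodule.span K ({z₁₂, z₂₃, z₃₄, z₄₁} : Set L) := by
  intro v w hv hw hli hlie
  have hC : IsFourCycleBracket v₁ v₂ v₃ v₄ z₁₂ z₂₃ z₃₄ z₄₁ := ⟨h12, h23, h34, h41, h13, h24⟩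
  have hz : LinearIndependent K ![z₁₂, z₂₃, z₃₄, z₄₁] :=
    hind.comp (Fin.addNat · 4) fun _ _ => (Fin.addNat_inj 4).1
  have hrange : ({v₁, v₂, v₃, v₄} : Set L) = Set.range ![v₁, v₂, v₃, v₄] := by
    simp only [Matrix.range_cons, Matrix.range_empty, Set.union_empty, Set.singleton_union]
  rw [hrange] at hv hw
  obtain ⟨a, rfl⟩ := (Submodule.mem_span_range_iff_exists_fun K).1 hv
  obtain ⟨b, rfl⟩ := (Submodule.mem_span_range_iff_exists_fun K).1 hw
  refine le_antisymm (Submodule.span_le.2 ?_) (hC.span_center_le _ a b ?_ ?_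
    (hC.diagonal_minor_ne_zero_of_lie_eq_zero hz a b hli hlie))
  · rintro _ (⟨x, rfl⟩ | ⟨x, rfl⟩) <;> exact hC.lie_mem_span_center hspan hcent _ _
  · exact fun x => Submodule.subset_span (Or.inl ⟨x, rfl⟩)
  · exact fun x => Submodule.subset_span (Or.inr ⟨x, rfl⟩)

/-- In the 2-step nilpotent Lie algebra of the 4-cycle graph, for any pair of linearly
independent commuting elements `v, w` of `span{v₁,…,v₄}`, the span of `⁅v,g⁆ ∪ ⁅w,g⁆`
is the whole center `span{z₁₂, z₂₃, z₃₄, z₄₁}`. -/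
theorem four_cycle_brackets_span_center
    {K L : Type*} [Field K] [CharZero K] [LieRing L] [LieAlgebra K L]
    (v₁ v₂ v₃ v₄ z₁₂ z₂₃ z₃₄ z₄₁ : L)
    (hind : LinearIndependent K ![v₁, v₂, v₃, v₄, z₁₂, z₂₃, z₃₄, z₄₁])
    (hspan : Submodule.span K
      (Set.range ![v₁, v₂, v₃, v₄, z₁₂, z₂₃, z₃₄, z₄₁]) = ⊤)
    (h12 : ⁅v₁, v₂⁆ = z₁₂) (h23 : ⁅v₂, v₃⁆ = z₂₃)
    (h34 : ⁅v₃, v₄⁆ = z₃₄) (h41 : ⁅v₄, v₁⁆ = z₄₁)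
    (h13 : ⁅v₁, v₃⁆ = 0) (h24 : ⁅v₂, v₄⁆ = 0)
    (hcent : ∀ x : L, ⁅z₁₂, x⁆ = 0 ∧ ⁅z₂₃, x⁆ = 0 ∧ ⁅z₃₄, x⁆ = 0 ∧ ⁅z₄₁, x⁆ = 0) :
    ∀ v w : L, v ∈ Submodule.span K ({v₁, v₂, v₃, v₄} : Set L) →
      w ∈ Submodule.span K ({v₁, v₂, v₃, v₄} : Set L) →
      LinearIndependent K ![v, w] → ⁅v, w⁆ = 0 →
      Submodule.span K ({u | ∃ x : L, u = ⁅v, x⁆} ∪ {u | ∃ x : L, u = ⁅w, x⁆}) =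
        Submodule.span K ({z₁₂, z₂₃, z₃₄, z₄₁} : Set L) :=
  four_cycle_brackets_span_center_general v₁ v₂ v₃ v₄ z₁₂ z₂₃ z₃₄ z₄₁ hind hspan h12 h23 h34 h41 h13
    h24 hcent
end
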